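/- arXiv:2206.03342 — 6 statements merged into one kernel-verified Lean document; each statement's English description precedes it below -/
import Mathlib

section
/- Fix n ≥ 1. For all a, b ∈ {0,…,2^n−1}: b ⪯ a in the polar partial order if and only if m_a ⪯ m_b in the monomial partial order. -/
/-- Binary expansion of `i`, LSB first, as a vector over `𝔽₂` (`bin(i)_t` = `t`-th bit of `i`). -/
def binExp (n : ℕ) (i : ℕ) : Fin n → ZMod 2 := fun t => if Nat.testBit i t then 1 else 0

/-- One step of the universal partial order on indices: `i ◁ j`. -/
def polarCovers (n : ℕ) (i j : ℕ) : Prop :=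
  (∃ t < n, Nat.testBit i t = false ∧ Nat.testBit j t = true ∧
      ∀ s, s ≠ t → Nat.testBit i s = Nat.testBit j s) ∨
  (∃ t, t + 1 < n ∧ Nat.testBit i t = true ∧ Nat.testBit i (t + 1) = false ∧
      Nat.testBit j t = false ∧ Nat.testBit j (t + 1) = true ∧
      ∀ s, s ≠ t → s ≠ t + 1 → Nat.testBit i s = Nat.testBit j s)

/-- The polar (universal) partial order `⪯`: reflexive-transitive closure of `◁`. -/
def polarLE (n : ℕ) : ℕ → ℕ → Prop := Relation.ReflTransGen (polarCovers n)

/-- Variable-index set of the negative monomial `m_t`: `{i : bin(t)_i = 0}`. -/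
def varSet (n : ℕ) (t : ℕ) : Finset (Fin n) :=
  Finset.univ.filter (fun i : Fin n => ¬ Nat.testBit t i)

/-- The partial order on (negative) monomials, given via their variable-index sets:
`Q ⪯ R` iff there is a subset `R'` of `R` with `|R'| = |Q|` dominating `Q`
elementwise in increasing order (`List.Forall₂` forces the lengths, hence the
cardinalities, to agree; in particular if `|Q| > |R|` the relation never holds,
and if `|Q| = |R|` it forces `R' = R`). -/
def monLE {n : ℕ} (Q R : Finset (Fin n)) : Prop :=
  ∃ R' ⊆ R, List.Forall₂ (· ≤ ·) (Q.sort (· ≤ ·)) (R'.sort (· ≤ ·))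



open List Finset

section ListLemmas

variable {α : Type*} [LinearOrder α]

lemma countP_le_of_forall₂ (p : α → Bool) (hp : ∀ a b, a ≤ b → p a = true → p b = true) :
    ∀ {l₁ l₂ : List α}, List.Forall₂ (· ≤ ·) l₁ l₂ → l₁.countP p ≤ l₂.countP p := by
  intro l₁ l₂ h
  induction h with
  | nil => simp
  | @cons a b l₁ l₂ hab htl ih =>
    simp only [List.countP_cons]
    by_cases hpa : p a = true
    · have hpb := hp a b hab hpa
      rw [if_pos hpa, if_pos hpb]
      omega
    · rw [if_neg hpa]
      split <;> omega

lemma greedy (l₁ : List α) :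
    ∀ l₂ : List α, l₁.Pairwise (· > ·) → l₂.Pairwise (· > ·) →
      (∀ x : α, l₁.countP (fun u => decide (x ≤ u)) ≤ l₂.countP (fun u => decide (x ≤ u))) →
      ∃ l₂', l₂' <+ l₂ ∧ List.Forall₂ (· ≤ ·) l₁ l₂' := by
  induction l₁ with
  | nil => intro l₂ _ _ _; exact ⟨[], List.nil_sublist _, List.Forall₂.nil⟩
  | cons q t₁ ih =>
    intro l₂ h₁ h₂ hc
    have hpos : 0 < l₂.countP (fun u => decide (q ≤ u)) := by
      have h0 := hc q
      have h1 : 0 < (q :: t₁).countP (fun u => decide (q ≤ u)) := by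
        rw [List.countP_cons]; simp
      omega
    rcases l₂ with _ | ⟨r, t₂⟩
    · simp at hpos
    · have hqr : q ≤ r := by
        rcases List.countP_pos_iff.mp hpos with ⟨u, hu, hqu⟩
        have hqu' : q ≤ u := of_decide_eq_true hqu
        rcases List.mem_cons.mp hu with rfl | hu'
        · exact hqu'
        · exact hqu'.trans (le_of_lt (List.rel_of_pairwise_cons h₂ hu'))
      have hc' : ∀ x : α, t₁.countP (fun u => decide (x ≤ u)) ≤ t₂.countP (fun u => decide (x ≤ u)) := by
        intro x
        by_cases hxq : x ≤ q
        · have h0 := hc x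
          have hxr : x ≤ r := hxq.trans hqr
          simp [List.countP_cons, hxq, hxr] at h0
          omega
        · have h0 : t₁.countP (fun u => decide (x ≤ u)) = 0 := by
            rw [List.countP_eq_zero]
            intro u hu
            have huq : u < q := List.rel_of_pairwise_cons h₁ hu
            simp only [decide_eq_true_eq]
            exact fun hxu => hxq (hxu.trans huq.le)
          omega
      obtain ⟨t₂', hsub, hf⟩ := ih t₂ h₁.of_cons h₂.of_cons hc'
      exact ⟨r :: t₂', hsub.cons₂ r, List.Forall₂.cons hqr hf⟩

lemma sort_toFinset_eq [DecidableEq α] (l : List α) (h : l.Pairwise (· < ·)) :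
    l.toFinset.sort (· ≤ ·) = l := by
  have hnd : l.Nodup := h.nodup
  apply List.Perm.eq_of_pairwise' (r := (· ≤ ·)) (Finset.pairwise_sort _ _) (h.imp le_of_lt) ?_
  apply Multiset.coe_eq_coe.mp
  rw [Finset.sort_eq, List.toFinset_val, List.dedup_eq_self.mpr hnd]

end ListLemmas

def cardGE {n : ℕ} (Q : Finset (Fin n)) (x : ℕ) : ℕ := (Q.filter (fun u => x ≤ u.val)).card

lemma cardGE_eq_countP {n : ℕ} (Q : Finset (Fin n)) (x : ℕ) :
    cardGE Q x = (Q.sort (· ≤ ·)).countP (fun u => decide (x ≤ u.val)) := by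
  unfold cardGE
  have h1 : (Q.filter (fun u => x ≤ u.val)).card
      = Multiset.countP (fun u : Fin n => x ≤ u.val) Q.val := by
    rw [Multiset.countP_eq_card_filter]; rfl
  rw [h1, ← Finset.sort_eq Q (· ≤ ·), Multiset.coe_countP]

lemma monLE_iff {n : ℕ} (Q R : Finset (Fin n)) :
    monLE Q R ↔ ∀ x : ℕ, cardGE Q x ≤ cardGE R x := by
  constructor
  · rintro ⟨R', hsub, hf⟩ x
    rw [cardGE_eq_countP]
    have h1 : (Q.sort (· ≤ ·)).countP (fun u => decide (x ≤ u.val))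
        ≤ (R'.sort (· ≤ ·)).countP (fun u => decide (x ≤ u.val)) := by
      refine countP_le_of_forall₂ _ (fun a b hab ha => ?_) hf
      simp only [decide_eq_true_eq] at *
      exact ha.trans hab
    have h2 : (R'.sort (· ≤ ·)).countP (fun u => decide (x ≤ u.val)) ≤ cardGE R x := by
      rw [← cardGE_eq_countP, cardGE, cardGE]
      exact Finset.card_le_card (Finset.filter_subset_filter _ hsub)
    exact h1.trans h2
  · intro h
    have hQrev : (Q.sort (· ≤ ·)).reverse.Pairwise (· > ·) := by
      rw [List.pairwise_reverse]
      exact (Finset.sortedLT_sort Q).pairwise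
    have hRrev : (R.sort (· ≤ ·)).reverse.Pairwise (· > ·) := by
      rw [List.pairwise_reverse]
      exact (Finset.sortedLT_sort R).pairwise
    have hcount : ∀ x : Fin n,
        (Q.sort (· ≤ ·)).reverse.countP (fun u => decide (x ≤ u))
          ≤ (R.sort (· ≤ ·)).reverse.countP (fun u => decide (x ≤ u)) := by
      intro x
      rw [List.countP_reverse, List.countP_reverse]
      have hx := h x.val
      rw [cardGE_eq_countP, cardGE_eq_countP] at hx
      have hpred : (fun u : Fin n => decide (x ≤ u)) = fun u => decide (x.val ≤ u.val) := by
        funext u; exact decide_eq_decide.mpr Fin.le_def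
      rw [hpred]; exact hx
    obtain ⟨l₂', hsub, hf⟩ := greedy _ _ hQrev hRrev hcount
    have hsub' : l₂'.reverse <+ R.sort (· ≤ ·) := by
      have h2 := hsub.reverse
      rwa [List.reverse_reverse] at h2
    have hsorted : l₂'.reverse.Pairwise (· < ·) := (Finset.sortedLT_sort R).pairwise.sublist hsub'
    refine ⟨l₂'.reverse.toFinset, ?_, ?_⟩
    · intro u hu
      rw [List.mem_toFinset] at hu
      exact (Finset.mem_sort (α := Fin n) (· ≤ ·)).mp (hsub'.subset hu)
    · rw [sort_toFinset_eq _ hsorted]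
      have h3 := List.rel_reverse hf
      rwa [List.reverse_reverse] at h3

def zc (n x i : ℕ) : ℕ := cardGE (varSet n i) x

lemma mem_varSet {n i : ℕ} (u : Fin n) :
    u ∈ varSet n i ↔ Nat.testBit i u.val = false := by
  simp [varSet]

lemma mem_zcSet {n i x : ℕ} (u : Fin n) :
    u ∈ (varSet n i).filter (fun u => x ≤ u.val) ↔
      (Nat.testBit i u.val = false ∧ x ≤ u.val) := by
  rw [Finset.mem_filter, mem_varSet]

lemma zc_def {n x i : ℕ} : zc n x i = ((varSet n i).filter (fun u => x ≤ u.val)).card := rfl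

lemma zc_eq_zero {n x i : ℕ} (h : n ≤ x) : zc n x i = 0 := by
  rw [zc_def, Finset.card_eq_zero, Finset.filter_eq_empty_iff]
  intro u _
  have := u.isLt
  omega

lemma zc_succ {n i : ℕ} (t : ℕ) (ht : t < n) :
    zc n t i = zc n (t + 1) i + (if Nat.testBit i t then 0 else 1) := by
  classical
  have hsplit : (varSet n i).filter (fun u => t ≤ u.val)
      = (varSet n i).filter (fun u => t + 1 ≤ u.val) ∪ (varSet n i).filter (fun u => u.val = t) := by
    rw [← Finset.filter_or]
    exact Finset.filter_congr (fun u _ => by omega)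
  have hdisj : Disjoint ((varSet n i).filter (fun u => t + 1 ≤ u.val))
      ((varSet n i).filter (fun u => u.val = t)) := by
    rw [Finset.disjoint_left]
    intro u h1 h2
    rw [Finset.mem_filter] at h1 h2
    omega
  have hcard2 : ((varSet n i).filter (fun u => u.val = t)).card
      = (if Nat.testBit i t then 0 else 1) := by
    have he : (varSet n i).filter (fun u => u.val = t)
        = (varSet n i).filter (fun u => u = ⟨t, ht⟩) := by
      refine Finset.filter_congr (fun u _ => ?_)
      constructor
      · intro h; exact Fin.ext h
      · intro h; rw [h]
    rw [he, Finset.filter_eq']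
    by_cases hb : Nat.testBit i t
    · rw [if_neg, if_pos hb]
      · simp
      · rw [mem_varSet]; simp [hb]
    · rw [if_pos, if_neg hb]
      · simp
      · rw [mem_varSet]; simp only [Bool.not_eq_true] at hb; exact hb
  rw [zc_def, zc_def, hsplit, Finset.card_union_of_disjoint hdisj, hcard2]

lemma eq_of_zc_eq {n a b : ℕ} (ha : a < 2 ^ n) (hb : b < 2 ^ n)
    (h : ∀ x, zc n x a = zc n x b) : a = b := by
  apply Nat.eq_of_testBit_eq
  intro t
  rcases lt_or_ge t n with htn | htn
  · have h1 := zc_succ (n := n) (i := a) t htn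
    have h2 := zc_succ (n := n) (i := b) t htn
    have h3 := h t
    have h4 := h (t + 1)
    by_cases hA : Nat.testBit a t <;> by_cases hB : Nat.testBit b t <;>
        simp [hA, hB] at h1 h2 ⊢ <;> omega
  · rw [Nat.testBit_lt_two_pow (lt_of_lt_of_le ha (Nat.pow_le_pow_right (by norm_num) htn)),
      Nat.testBit_lt_two_pow (lt_of_lt_of_le hb (Nat.pow_le_pow_right (by norm_num) htn))]

lemma zc_le_of_covers {n i j : ℕ} (h : polarCovers n i j) (x : ℕ) :
    zc n x j ≤ zc n x i := by
  rcases h with ⟨t, htn, hit, hjt, hoth⟩ | ⟨t, htn, hit, hit1, hjt, hjt1, hoth⟩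
  · have hsub : varSet n j ⊆ varSet n i := by
      intro u hu
      rw [mem_varSet] at hu ⊢
      by_cases hut : u.val = t
      · rw [hut] at hu; rw [hu] at hjt; exact absurd hjt (by simp)
      · rw [hoth u.val hut]; exact hu
    exact Finset.card_le_card (Finset.filter_subset_filter _ hsub)
  · rw [zc_def, zc_def]
    have hvne : ∀ u : Fin n, u ∈ (varSet n j).filter (fun u => x ≤ u.val) → u.val ≠ t + 1 := by
      intro u hu hh
      rw [mem_zcSet] at hu
      rw [hh, hjt1] at hu
      exact absurd hu.1 (by simp)
    have hmem : ∀ u ∈ (varSet n j).filter (fun u => x ≤ u.val),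
        (if u.val = t then (⟨t + 1, htn⟩ : Fin n) else u)
          ∈ (varSet n i).filter (fun u => x ≤ u.val) := by
      intro u hu
      have hu1 := hu
      rw [mem_zcSet] at hu1
      by_cases hut : u.val = t
      · rw [if_pos hut, mem_zcSet]
        refine ⟨hit1, ?_⟩
        show x ≤ t + 1
        omega
      · rw [if_neg hut, mem_zcSet]
        refine ⟨?_, hu1.2⟩
        rw [hoth u.val hut (hvne u hu)]
        exact hu1.1
    apply Finset.card_le_card_of_injOn _ hmem
    intro u hu v hv huv
    simp only [Finset.mem_coe] at hu hv
    simp only at huv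
    by_cases hut : u.val = t <;> by_cases hvt : v.val = t
    · exact Fin.ext (by omega)
    · rw [if_pos hut, if_neg hvt] at huv
      exact absurd (congrArg Fin.val huv.symm) (hvne v hv)
    · rw [if_neg hut, if_pos hvt] at huv
      exact absurd (congrArg Fin.val huv) (hvne u hu)
    · rwa [if_neg hut, if_neg hvt] at huv

lemma move1 {n b : ℕ} (hb : b < 2 ^ n) (q : ℕ) (hq : q < n)
    (hbq : Nat.testBit b q = false) :
    ∃ c, polarCovers n b c ∧ c < 2 ^ n ∧
      (∀ x, x ≤ q → zc n x c + 1 = zc n x b) ∧ (∀ x, q < x → zc n x c = zc n x b) := by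
  classical
  set c := b ||| 2 ^ q with hc
  have hcs : ∀ s, Nat.testBit c s = (Nat.testBit b s || decide (q = s)) := by
    intro s
    rw [hc, Nat.testBit_lor, Nat.testBit_two_pow]
  have hcq : Nat.testBit c q = true := by rw [hcs]; simp
  have hcoth : ∀ s, s ≠ q → Nat.testBit c s = Nat.testBit b s := by
    intro s hs
    have h1 : q ≠ s := fun h => hs h.symm
    rw [hcs]
    simp [h1]
  have hc2 : c < 2 ^ n := by
    apply Nat.lt_pow_two_of_testBit
    intro i hi
    rw [hcs, Nat.testBit_lt_two_pow (lt_of_lt_of_le hb (Nat.pow_le_pow_right (by norm_num) hi))]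
    simp only [Bool.false_or, decide_eq_false_iff_not]
    omega
  have hvs : varSet n c = (varSet n b).erase ⟨q, hq⟩ := by
    ext u
    rw [Finset.mem_erase, mem_varSet, mem_varSet, hcs]
    constructor
    · intro h
      rcases Bool.or_eq_false_iff.mp h with ⟨h1, h2⟩
      refine ⟨?_, h1⟩
      intro hu
      rw [hu] at h2
      simp at h2
    · rintro ⟨h1, h2⟩
      rw [Bool.or_eq_false_iff]
      refine ⟨h2, ?_⟩
      rw [decide_eq_false]
      intro hqu
      exact h1 (Fin.ext hqu.symm)
  refine ⟨c, Or.inl ⟨q, hq, hbq, hcq, fun s hs => (hcoth s hs).symm⟩, hc2, ?_, ?_⟩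
  · intro x hx
    rw [zc_def, zc_def, hvs, Finset.filter_erase]
    have hm : (⟨q, hq⟩ : Fin n) ∈ (varSet n b).filter (fun u => x ≤ u.val) := by
      rw [mem_zcSet]
      exact ⟨hbq, hx⟩
    rw [Finset.card_erase_of_mem hm]
    have h0 : 0 < ((varSet n b).filter (fun u => x ≤ u.val)).card :=
      Finset.card_pos.mpr ⟨_, hm⟩
    omega
  · intro x hx
    have hnm : (⟨q, hq⟩ : Fin n) ∉ (varSet n b).filter (fun u => x ≤ u.val) := by
      intro hm
      rw [mem_zcSet] at hm
      have h2 : x ≤ q := hm.2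
      omega
    rw [zc_def, zc_def, hvs, Finset.filter_erase, Finset.erase_eq_of_notMem hnm]

lemma move2 {n b : ℕ} (hb : b < 2 ^ n) (p : ℕ) (hp : p + 1 < n)
    (hbp : Nat.testBit b p = true) (hbp1 : Nat.testBit b (p + 1) = false) :
    ∃ c, polarCovers n b c ∧ c < 2 ^ n ∧
      (∀ x, x ≤ p → zc n x c = zc n x b) ∧ (zc n (p + 1) c + 1 = zc n (p + 1) b) ∧
      (∀ x, p + 1 < x → zc n x c = zc n x b) := by
  classical
  set c := b ^^^ 2 ^ p ^^^ 2 ^ (p + 1) with hc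
  have hcs : ∀ s, Nat.testBit c s
      = ((Nat.testBit b s).xor (decide (p = s))).xor (decide (p + 1 = s)) := by
    intro s
    rw [hc, Nat.testBit_xor, Nat.testBit_xor, Nat.testBit_two_pow, Nat.testBit_two_pow]
  have hcp : Nat.testBit c p = false := by
    have h1 : p + 1 ≠ p := by omega
    rw [hcs, hbp]
    simp [h1]
  have hcp1 : Nat.testBit c (p + 1) = true := by
    have h1 : p ≠ p + 1 := by omega
    rw [hcs, hbp1]
    simp [h1]
  have hcoth : ∀ s, s ≠ p → s ≠ p + 1 → Nat.testBit c s = Nat.testBit b s := by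
    intro s h1 h2
    have h1' : p ≠ s := fun h => h1 h.symm
    have h2' : p + 1 ≠ s := fun h => h2 h.symm
    rw [hcs]
    simp [h1', h2']
  have hc2 : c < 2 ^ n := by
    apply Nat.lt_pow_two_of_testBit
    intro i hi
    rw [hcoth i (by omega) (by omega)]
    exact Nat.testBit_lt_two_pow (lt_of_lt_of_le hb (Nat.pow_le_pow_right (by norm_num) hi))
  have hpn : p < n := by omega
  have hvs : varSet n c = insert ⟨p, hpn⟩ ((varSet n b).erase ⟨p + 1, hp⟩) := by
    ext u
    rw [Finset.mem_insert, Finset.mem_erase, mem_varSet, mem_varSet]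
    by_cases h1 : u.val = p
    · constructor
      · intro _
        exact Or.inl (Fin.ext h1)
      · intro _
        rw [h1]
        exact hcp
    · by_cases h2 : u.val = p + 1
      · constructor
        · intro hcu
          rw [h2, hcp1] at hcu
          exact Bool.noConfusion hcu
        · rintro (h | ⟨h3, h4⟩)
          · exact absurd (congrArg Fin.val h) h1
          · exact absurd (Fin.ext h2) h3
      · rw [hcoth u.val h1 h2]
        constructor
        · intro h
          exact Or.inr ⟨fun hh => h2 (congrArg Fin.val hh), h⟩
        · rintro (h | ⟨-, h⟩)
          · exact absurd (congrArg Fin.val h) h1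
          · exact h
  have hpF : ∀ x, (⟨p, hpn⟩ : Fin n) ∉ ((varSet n b).filter (fun u => x ≤ u.val)).erase ⟨p + 1, hp⟩ := by
    intro x hm
    rw [Finset.mem_erase, mem_zcSet] at hm
    have h3 : Nat.testBit b p = false := hm.2.1
    rw [hbp] at h3
    exact Bool.noConfusion h3
  have hp1mem : ∀ x, x ≤ p + 1 → (⟨p + 1, hp⟩ : Fin n) ∈ (varSet n b).filter (fun u => x ≤ u.val) := by
    intro x hx
    rw [mem_zcSet]
    exact ⟨hbp1, hx⟩
  refine ⟨c, Or.inr ⟨p, hp, hbp, hbp1, hcp, hcp1, fun s hs1 hs2 => (hcoth s hs1 hs2).symm⟩,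
    hc2, ?_, ?_, ?_⟩
  · intro x hx
    rw [zc_def, zc_def, hvs, Finset.filter_insert, Finset.filter_erase,
      if_pos (show x ≤ p from hx), Finset.card_insert_of_notMem (hpF x),
      Finset.card_erase_of_mem (hp1mem x (by omega))]
    have h0 : 0 < ((varSet n b).filter (fun u => x ≤ u.val)).card :=
      Finset.card_pos.mpr ⟨_, hp1mem x (by omega)⟩
    omega
  · rw [zc_def, zc_def, hvs, Finset.filter_insert, Finset.filter_erase,
      if_neg (show ¬ p + 1 ≤ p by omega), Finset.card_erase_of_mem (hp1mem (p + 1) le_rfl)]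
    have h0 : 0 < ((varSet n b).filter (fun u => p + 1 ≤ u.val)).card :=
      Finset.card_pos.mpr ⟨_, hp1mem (p + 1) le_rfl⟩
    omega
  · intro x hx
    have hnm : (⟨p + 1, hp⟩ : Fin n) ∉ (varSet n b).filter (fun u => x ≤ u.val) := by
      intro hm
      rw [mem_zcSet] at hm
      have h2 : x ≤ p + 1 := hm.2
      omega
    rw [zc_def, zc_def, hvs, Finset.filter_insert, Finset.filter_erase,
      if_neg (show ¬ x ≤ p by omega), Finset.erase_eq_of_notMem hnm]

def mu (n b : ℕ) : ℕ := ∑ x ∈ Finset.range n, zc n x b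

lemma dom_to_polarLE (n a : ℕ) (ha : a < 2 ^ n) :
    ∀ m b, b < 2 ^ n → (∀ x, zc n x a ≤ zc n x b) → mu n b ≤ m → polarLE n b a := by
  intro m
  induction m using Nat.strong_induction_on with
  | _ m ih =>
  intro b hb hdom hmu
  by_cases hab : b = a
  · rw [hab]
    exact Relation.ReflTransGen.refl
  case neg =>
  classical
  -- the set of strict indices is nonempty
  have hS : ((Finset.range n).filter (fun x => zc n x a < zc n x b)).Nonempty := by
    rw [Finset.filter_nonempty_iff]
    by_contra hS
    push_neg at hS
    apply hab
    refine (eq_of_zc_eq ha hb ?_).symm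
    intro x
    rcases lt_or_ge x n with hx | hx
    · exact le_antisymm (hdom x) (hS x (Finset.mem_range.mpr hx))
    · rw [zc_eq_zero hx, zc_eq_zero hx]
  set q := (((Finset.range n).filter (fun x => zc n x a < zc n x b))).max' hS with hqdef
  have hq_mem : q ∈ (Finset.range n).filter (fun x => zc n x a < zc n x b) := by
    rw [hqdef]
    exact Finset.max'_mem _ hS
  rw [Finset.mem_filter, Finset.mem_range] at hq_mem
  obtain ⟨hqn, hqlt⟩ := hq_mem
  have hq_max : ∀ x, zc n x a < zc n x b → x ≤ q := by
    intro x hx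
    rcases lt_or_ge x n with h1 | h1
    · rw [hqdef]
      apply Finset.le_max'
      rw [Finset.mem_filter, Finset.mem_range]
      exact ⟨h1, hx⟩
    · rw [zc_eq_zero h1, zc_eq_zero h1] at hx
      omega
  have hgt : ∀ x, q < x → zc n x a = zc n x b := by
    intro x hx
    rcases eq_or_lt_of_le (hdom x) with h | h
    · exact h
    · exact absurd (hq_max x h) (by omega)
  -- bits at q
  have hq1 := zc_succ (n := n) (i := a) q hqn
  have hq2 := zc_succ (n := n) (i := b) q hqn
  have hq3 := hgt (q + 1) (by omega)
  have hbq : Nat.testBit b q = false := by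
    cases hB : Nat.testBit b q
    · rfl
    · exfalso
      rw [hB] at hq2
      simp at hq2
      cases hA : Nat.testBit a q <;> rw [hA] at hq1 <;> simp at hq1 <;> omega
  -- split on whether there is an equality index below q
  rcases ((Finset.range (q + 1)).filter (fun x => zc n x a = zc n x b)).eq_empty_or_nonempty
    with hT | hT
  · -- all strict up to q : type-1 move at q
    have hstrict : ∀ x, x ≤ q → zc n x a < zc n x b := by
      intro x hx
      rcases eq_or_lt_of_le (hdom x) with h | h
      · exfalso
        have : x ∈ (Finset.range (q + 1)).filter (fun x => zc n x a = zc n x b) :=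
          Finset.mem_filter.mpr ⟨Finset.mem_range.mpr (by omega), h⟩
        rw [hT] at this
        exact absurd this (Finset.notMem_empty x)
      · exact h
    obtain ⟨c, hcov, hc2, hle, heq⟩ := move1 hb q hqn hbq
    have hdomc : ∀ x, zc n x a ≤ zc n x c := by
      intro x
      rcases le_or_gt x q with hx | hx
      · have h1 := hle x hx
        have h2 := hstrict x hx
        omega
      · rw [heq x hx]
        exact hdom x
    have hmuc : mu n c < mu n b := by
      apply Finset.sum_lt_sum
      · intro i _
        rcases le_or_gt i q with hi | hi
        · have := hle i hi; omega
        · rw [heq i hi]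
      · exact ⟨q, Finset.mem_range.mpr hqn, by have := hle q le_rfl; omega⟩
    exact Relation.ReflTransGen.head hcov
      (ih (mu n c) (by omega) c hc2 hdomc le_rfl)
  · -- there is an equality index below q : type-2 move
    set s0 := ((Finset.range (q + 1)).filter (fun x => zc n x a = zc n x b)).max' hT with hs0def
    have hs0_mem : s0 ∈ (Finset.range (q + 1)).filter (fun x => zc n x a = zc n x b) := by
      rw [hs0def]
      exact Finset.max'_mem _ hT
    rw [Finset.mem_filter, Finset.mem_range] at hs0_mem
    obtain ⟨hs0q, hs0eq⟩ := hs0_mem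
    have hs0lt : s0 < q := by
      rcases eq_or_lt_of_le (show s0 ≤ q by omega) with h | h
      · exfalso; rw [h] at hs0eq; omega
      · exact h
    have hstr : ∀ x, s0 < x → x ≤ q → zc n x a < zc n x b := by
      intro x h1 h2
      rcases eq_or_lt_of_le (hdom x) with h | h
      · exfalso
        have hmem : x ∈ (Finset.range (q + 1)).filter (fun x => zc n x a = zc n x b) :=
          Finset.mem_filter.mpr ⟨Finset.mem_range.mpr (by omega), h⟩
        have h6 : x ≤ s0 := by
          rw [hs0def]
          exact Finset.le_max' _ x hmem
        omega
      · exact h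
    -- bit of b at s0 is 1
    have hs0n : s0 < n := by omega
    have hb1 := zc_succ (n := n) (i := a) s0 hs0n
    have hb2 := zc_succ (n := n) (i := b) s0 hs0n
    have hb3 := hstr (s0 + 1) (by omega) (by omega)
    have hbs0 : Nat.testBit b s0 = true := by
      cases hB : Nat.testBit b s0
      · exfalso
        rw [hB] at hb2
        simp at hb2
        cases hA : Nat.testBit a s0 <;> rw [hA] at hb1 <;> simp at hb1 <;> omega
      · rfl
    -- find the end of the run of ones of b starting at s0
    have hex : ∃ k, Nat.testBit b (s0 + k + 1) = false := by
      refine ⟨q - s0 - 1, ?_⟩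
      have h4 : s0 + (q - s0 - 1) + 1 = q := by omega
      rw [h4]
      exact hbq
    set kf := Nat.find hex with hkf
    set p := s0 + kf with hpdef
    have hp1 : Nat.testBit b (p + 1) = false := Nat.find_spec hex
    have hkfle : kf ≤ q - s0 - 1 := by
      apply Nat.find_min'
      have h4 : s0 + (q - s0 - 1) + 1 = q := by omega
      rw [h4]
      exact hbq
    have hpq : p + 1 ≤ q := by omega
    have hpn : p + 1 < n := by omega
    have hpbit : Nat.testBit b p = true := by
      rcases Nat.eq_zero_or_pos kf with h0 | h0
      · rw [show p = s0 by omega]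
        exact hbs0
      · have hmin := Nat.find_min hex (show kf - 1 < kf by omega)
        have h4 : s0 + (kf - 1) + 1 = p := by omega
        rw [h4] at hmin
        cases hBB : Nat.testBit b p
        · exact absurd hBB hmin
        · rfl
    obtain ⟨c, hcov, hc2, heq1, heq2, heq3⟩ := move2 hb p hpn hpbit hp1
    have hdomc : ∀ x, zc n x a ≤ zc n x c := by
      intro x
      rcases le_or_gt x p with hx | hx
      · rw [heq1 x hx]
        exact hdom x
      · rcases eq_or_lt_of_le (show p + 1 ≤ x by omega) with hx1 | hx1
        · rw [← hx1]
          have h5 := hstr (p + 1) (by omega) hpq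
          omega
        · rw [heq3 x hx1]
          exact hdom x
    have hmuc : mu n c < mu n b := by
      apply Finset.sum_lt_sum
      · intro i _
        rcases le_or_gt i p with hi | hi
        · rw [heq1 i hi]
        · rcases eq_or_lt_of_le (show p + 1 ≤ i by omega) with hi1 | hi1
          · rw [← hi1]; omega
          · rw [heq3 i hi1]
      · exact ⟨p + 1, Finset.mem_range.mpr hpn, by omega⟩
    exact Relation.ReflTransGen.head hcov
      (ih (mu n c) (by omega) c hc2 hdomc le_rfl)

lemma polar_dom {n b a : ℕ} (h : polarLE n b a) : ∀ x, zc n x a ≤ zc n x b := by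
  induction h with
  | refl => intro x; exact le_rfl
  | tail h1 h2 ih => intro x; exact (zc_le_of_covers h2 x).trans (ih x)


/-- For every `a, b ∈ {0,…,2^n−1}` (with `n ≥ 1`): `b ⪯ a` in the polar partial order
iff `m_a ⪯ m_b` in the monomial partial order. -/
theorem polarLE_iff_monLE (n : ℕ) (hn : 1 ≤ n) (a b : ℕ) (ha : a < 2 ^ n) (hb : b < 2 ^ n) :
    polarLE n b a ↔ monLE (varSet n a) (varSet n b) := by
  rw [monLE_iff]
  constructor
  · intro h x
    exact polar_dom h x
  · intro h
    exact dom_to_polarLE n a ha (mu n b) b hb h le_rfl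
end

section
/- Fix n ≥ 1 and I ⊆ {0,…,2^n−1}. I is UPO-compliant if and only if the generating monomial set G = {m_t : t ∈ I} is decreasing, i.e., for all t, t' ∈ {0,…,2^n−1}, if m_{t'} ⪯ m_t in the monomial partial order and t ∈ I, then t' ∈ I. -/
/-- number of set bits of `i` in positions `[k, n)`. -/
def c1 (n i k : ℕ) : ℕ := ((Finset.Ico k n).filter (fun s => Nat.testBit i s)).card

lemma c1_congr {n a b k : ℕ} (h : ∀ s, k ≤ s → s < n → Nat.testBit a s = Nat.testBit b s) :
    c1 n a k = c1 n b k := by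
  unfold c1
  congr 1
  apply Finset.filter_congr
  intro s hs
  simp only [Finset.mem_Ico] at hs
  rw [h s hs.1 hs.2]

lemma c1_step {n a k : ℕ} (hk : k < n) :
    c1 n a k = c1 n a (k + 1) + (if Nat.testBit a k then 1 else 0) := by
  unfold c1
  have he : ((Finset.Ico (k+1) n).filter (fun s => Nat.testBit a s))
      = ((Finset.Ico k n).filter (fun s => Nat.testBit a s)).erase k := by
    rw [← Finset.filter_erase, Finset.Ico_erase_left, Finset.Ico_add_one_left_eq_Ioo]
  by_cases hb : Nat.testBit a k
  · have hmem : k ∈ (Finset.Ico k n).filter (fun s => Nat.testBit a s) := by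
      simp [Finset.mem_filter, Finset.mem_Ico, hk, hb]
    have hcard := Finset.card_erase_of_mem hmem
    have hpos : 0 < ((Finset.Ico k n).filter (fun s => Nat.testBit a s)).card :=
      Finset.card_pos.2 ⟨k, hmem⟩
    rw [he] at *
    simp [hb]
    omega
  · have hmem : k ∉ (Finset.Ico k n).filter (fun s => Nat.testBit a s) := by
      simp [Finset.mem_filter, hb]
    rw [he, Finset.erase_eq_of_notMem hmem]
    simp [hb]

lemma c1_flip {n a b t : ℕ} (ht : t < n) (ha : Nat.testBit a t = false)
    (hb : Nat.testBit b t = true)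
    (hag : ∀ s, s ≠ t → Nat.testBit a s = Nat.testBit b s) (k : ℕ) :
    c1 n b k = c1 n a k + (if k ≤ t then 1 else 0) := by
  by_cases hkt : k ≤ t
  · have hset : (Finset.Ico k n).filter (fun s => Nat.testBit b s)
        = insert t ((Finset.Ico k n).filter (fun s => Nat.testBit a s)) := by
      ext x
      by_cases hx : x = t
      · subst hx
        simp [Finset.mem_filter, Finset.mem_Ico, hkt, ht, hb]
      · simp only [Finset.mem_insert, Finset.mem_filter, hx, false_or]
        rw [hag x hx]
    have hnm : t ∉ (Finset.Ico k n).filter (fun s => Nat.testBit a s) := by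
      simp [Finset.mem_filter, ha]
    unfold c1
    rw [hset, Finset.card_insert_of_notMem hnm, if_pos hkt]
  · have : c1 n a k = c1 n b k := by
      apply c1_congr
      intro s hs _
      exact hag s (by omega)
    rw [if_neg hkt]
    omega

lemma c1_swap {n a b t : ℕ} (ht : t + 1 < n)
    (ha0 : Nat.testBit a t = true) (ha1 : Nat.testBit a (t+1) = false)
    (hb0 : Nat.testBit b t = false) (hb1 : Nat.testBit b (t+1) = true)
    (hag : ∀ s, s ≠ t → s ≠ t + 1 → Nat.testBit a s = Nat.testBit b s) (k : ℕ) :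
    c1 n b k = c1 n a k + (if k = t + 1 then 1 else 0) := by
  rcases lt_trichotomy k (t+1) with hk | hk | hk
  · -- k ≤ t : counts equal
    have hkt : k ≤ t := by omega
    have hset : (Finset.Ico k n).filter (fun s => Nat.testBit b s)
        = insert (t+1) (((Finset.Ico k n).filter (fun s => Nat.testBit a s)).erase t) := by
      ext x
      rcases eq_or_ne x (t+1) with hx | hx
      · subst hx
        simp [Finset.mem_filter, Finset.mem_Ico, hb1, ht]
        omega
      · rcases eq_or_ne x t with hx2 | hx2
        · subst hx2
          simp [Finset.mem_filter, Finset.mem_Ico, hb0, hx]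
        · simp only [Finset.mem_insert, hx, false_or, Finset.mem_erase, hx2,
            Finset.mem_filter, true_and, ne_eq, not_false_eq_true]
          rw [hag x hx2 hx]
    have hmemt : t ∈ (Finset.Ico k n).filter (fun s => Nat.testBit a s) := by
      simp [Finset.mem_filter, Finset.mem_Ico, ha0]
      omega
    have hnm : (t+1) ∉ ((Finset.Ico k n).filter (fun s => Nat.testBit a s)).erase t := by
      simp [Finset.mem_erase, Finset.mem_filter, ha1]
    have hpos : 0 < ((Finset.Ico k n).filter (fun s => Nat.testBit a s)).card :=
      Finset.card_pos.2 ⟨t, hmemt⟩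
    have hce := Finset.card_erase_of_mem hmemt
    have := Finset.card_insert_of_notMem hnm
    unfold c1
    rw [if_neg (by omega), hset, Finset.card_insert_of_notMem hnm, hce]
    omega
  · -- k = t+1
    subst hk
    have hset : (Finset.Ico (t+1) n).filter (fun s => Nat.testBit b s)
        = insert (t+1) ((Finset.Ico (t+1) n).filter (fun s => Nat.testBit a s)) := by
      ext x
      rcases eq_or_ne x (t+1) with hx | hx
      · subst hx
        simp [Finset.mem_filter, Finset.mem_Ico, hb1, ht]
      · rcases eq_or_ne x t with hx2 | hx2
        · subst hx2
          simp [Finset.mem_filter, Finset.mem_Ico, hx]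
        · simp only [Finset.mem_insert, hx, false_or, Finset.mem_filter]
          rw [hag x hx2 hx]
    have hnm : (t+1) ∉ (Finset.Ico (t+1) n).filter (fun s => Nat.testBit a s) := by
      simp [Finset.mem_filter, ha1]
    unfold c1
    rw [if_pos rfl, hset, Finset.card_insert_of_notMem hnm]
  · rw [if_neg (by omega)]
    apply (c1_congr _).symm
    intro s hs _
    exact hag s (by omega) (by omega)

lemma covers_c1 {n i j : ℕ} (h : polarCovers n i j) (k : ℕ) : c1 n i k ≤ c1 n j k := by
  rcases h with ⟨t, ht, hi, hj, hag⟩ | ⟨t, ht, hi0, hi1, hj0, hj1, hag⟩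
  · rw [c1_flip ht hi hj hag k]; omega
  · rw [c1_swap ht hi0 hi1 hj0 hj1 hag k]; omega

lemma polar_c1 {n i j : ℕ} (h : Relation.ReflTransGen (polarCovers n) i j) (k : ℕ) :
    c1 n i k ≤ c1 n j k := by
  induction h with
  | refl => exact le_refl _
  | tail h₁ h₂ ih => exact le_trans ih (covers_c1 h₂ k)

lemma testBit_high {n i s : ℕ} (hi : i < 2 ^ n) (hs : n ≤ s) : Nat.testBit i s = false :=
  Nat.testBit_lt_two_pow (lt_of_lt_of_le hi (Nat.pow_le_pow_right (by norm_num) hs))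

lemma c1_to_polar {n : ℕ} : ∀ d i j, 2 ^ n - i ≤ d → i < 2 ^ n → j < 2 ^ n →
    (∀ k, c1 n i k ≤ c1 n j k) → Relation.ReflTransGen (polarCovers n) i j := by
  intro d
  induction d with
  | zero => intro i j hd hi hj _; omega
  | succ d ih =>
    intro i j hd hi hj hc
    rcases eq_or_ne i j with rfl | hne
    · exact Relation.ReflTransGen.refl
    -- set of differing bits
    have hDne : ((Finset.range n).filter
        (fun t => Nat.testBit i t ≠ Nat.testBit j t)).Nonempty := by
      by_contra hemp
      rw [Finset.not_nonempty_iff_eq_empty] at hemp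
      apply hne
      apply Nat.eq_of_testBit_eq
      intro s
      by_cases hs : s < n
      · by_contra hne2
        have : s ∈ (Finset.range n).filter
            (fun t => Nat.testBit i t ≠ Nat.testBit j t) := by
          simp [Finset.mem_filter, Finset.mem_range, hs, hne2]
        rw [hemp] at this
        exact absurd this (Finset.notMem_empty s)
      · rw [testBit_high hi (by omega), testBit_high hj (by omega)]
    set D := (Finset.range n).filter (fun t => Nat.testBit i t ≠ Nat.testBit j t) with hD
    set t₀ := D.max' hDne with ht₀def
    have ht₀mem : t₀ ∈ D := D.max'_mem hDne
    simp only [hD, Finset.mem_filter, Finset.mem_range] at ht₀mem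
    obtain ⟨ht₀n, ht₀ne⟩ := ht₀mem
    have hagree : ∀ s, t₀ < s → Nat.testBit i s = Nat.testBit j s := by
      intro s hs
      by_cases hsn : s < n
      · by_contra hne2
        have : s ∈ D := by
          rw [hD]; simp [Finset.mem_filter, Finset.mem_range, hsn, hne2]
        exact absurd (Finset.le_max' D s this) (by omega)
      · rw [testBit_high hi (by omega), testBit_high hj (by omega)]
    have htail : c1 n i (t₀+1) = c1 n j (t₀+1) := by
      apply c1_congr
      intro s hs _
      exact hagree s (by omega)
    have hstepi := c1_step (n := n) (a := i) ht₀n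
    have hstepj := c1_step (n := n) (a := j) ht₀n
    have hbit : Nat.testBit i t₀ = false ∧ Nat.testBit j t₀ = true := by
      have := hc t₀
      rcases hbi : Nat.testBit i t₀ <;> rcases hbj : Nat.testBit j t₀ <;>
        simp [hbi, hbj] at hstepi hstepj ht₀ne ⊢ <;> omega
    by_cases hA : ∀ k ≤ t₀, c1 n i k < c1 n j k
    · -- add bit t₀
      set i' := i ||| 2 ^ t₀ with hi'def
      have hbits : ∀ s, s ≠ t₀ → Nat.testBit i' s = Nat.testBit i s := by
        intro s hs
        rw [hi'def, Nat.testBit_or, Nat.testBit_two_pow]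
        have hne' : t₀ ≠ s := Ne.symm hs
        simp [hne']
      have hbt : Nat.testBit i' t₀ = true := by
        rw [hi'def, Nat.testBit_or, Nat.testBit_two_pow]
        simp
      have hcov : polarCovers n i i' :=
        Or.inl ⟨t₀, ht₀n, hbit.1, hbt, fun s hs => (hbits s hs).symm⟩
      have hi'lt : i' < 2 ^ n := by
        apply Nat.lt_pow_two_of_testBit
        intro s hs
        rw [hbits s (by omega)]
        exact testBit_high hi hs
      have hlt : i < i' :=
        Nat.lt_of_testBit t₀ hbit.1 hbt (fun s hs => (hbits s (by omega)).symm)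
      have hinv : ∀ k, c1 n i' k ≤ c1 n j k := by
        intro k
        rw [c1_flip ht₀n hbit.1 hbt (fun s hs => (hbits s hs).symm) k]
        by_cases hk : k ≤ t₀
        · rw [if_pos hk]; exact hA k hk
        · rw [if_neg hk]; simpa using hc k
      exact Relation.ReflTransGen.head hcov (ih i' j (by omega) hi'lt hj hinv)
    · -- swap move
      push_neg at hA
      obtain ⟨k₀, hk₀le, hk₀⟩ := hA
      have hSne : ((Finset.range (t₀+1)).filter
          (fun k => c1 n i k = c1 n j k)).Nonempty := by
        refine ⟨k₀, ?_⟩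
        simp only [Finset.mem_filter, Finset.mem_range]
        exact ⟨by omega, le_antisymm (hc k₀) (by omega)⟩
      set S := (Finset.range (t₀+1)).filter (fun k => c1 n i k = c1 n j k) with hS
      set s₀ := S.max' hSne with hs₀def
      have hs₀mem : s₀ ∈ S := S.max'_mem hSne
      simp only [hS, Finset.mem_filter, Finset.mem_range] at hs₀mem
      obtain ⟨hs₀t, hs₀eq⟩ := hs₀mem
      have hsmax : ∀ k, s₀ < k → k ≤ t₀ → c1 n i k < c1 n j k := by
        intro k h1 h2
        rcases lt_or_eq_of_le (hc k) with h | h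
        · exact h
        · exfalso
          have : k ∈ S := by
            rw [hS]; simp only [Finset.mem_filter, Finset.mem_range]
            exact ⟨by omega, h⟩
          exact absurd (Finset.le_max' S k this) (by omega)
      have hs₀lt : s₀ < t₀ := by
        rcases lt_or_eq_of_le (by omega : s₀ ≤ t₀) with h | h
        · exact h
        · exfalso
          rw [h] at hs₀eq
          have h2 := c1_step (n := n) (a := i) ht₀n
          have h3 := c1_step (n := n) (a := j) ht₀n
          rw [hbit.1] at h2
          rw [hbit.2] at h3
          simp at h2 h3
          omega
      have hbs₀ : Nat.testBit i s₀ = true := by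
        have h1 := hsmax (s₀+1) (by omega) (by omega)
        have h2 := c1_step (n := n) (a := i) (k := s₀) (by omega)
        have h3 := c1_step (n := n) (a := j) (k := s₀) (by omega)
        rcases hbi : Nat.testBit i s₀ <;> rcases hbj : Nat.testBit j s₀ <;>
          simp [hbi, hbj] at h2 h3 ⊢ <;> omega
      -- find u : the largest set bit of i in [s₀, t₀]
      have hVne : ((Finset.Icc s₀ t₀).filter
          (fun v => Nat.testBit i v = true)).Nonempty := by
        refine ⟨s₀, ?_⟩
        simp [Finset.mem_filter, Finset.mem_Icc, hbs₀]
        omega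
      set V := (Finset.Icc s₀ t₀).filter (fun v => Nat.testBit i v = true) with hV
      set u := V.max' hVne with hudef
      have humem : u ∈ V := V.max'_mem hVne
      simp only [hV, Finset.mem_filter, Finset.mem_Icc] at humem
      obtain ⟨⟨hus₀, hut₀⟩, hbu⟩ := humem
      have hult : u < t₀ := by
        rcases lt_or_eq_of_le hut₀ with h | h
        · exact h
        · exfalso; rw [h] at hbu; rw [hbu] at hbit; exact absurd hbit.1 (by simp)
      have hbu1 : Nat.testBit i (u+1) = false := by
        by_contra hh
        rw [Bool.not_eq_false] at hh
        have : u + 1 ∈ V := by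
          rw [hV]; simp [Finset.mem_filter, Finset.mem_Icc, hh]; omega
        exact absurd (Finset.le_max' V (u+1) this) (by omega)
      set i' := i ^^^ (2 ^ u ||| 2 ^ (u+1)) with hi'def
      have hmask : ∀ s, Nat.testBit (2 ^ u ||| 2 ^ (u+1)) s
          = (decide (u = s) || decide (u + 1 = s)) := by
        intro s
        rw [Nat.testBit_or, Nat.testBit_two_pow, Nat.testBit_two_pow]
      have hbits : ∀ s, s ≠ u → s ≠ u + 1 → Nat.testBit i' s = Nat.testBit i s := by
        intro s h1 h2
        rw [hi'def, Nat.testBit_xor, hmask]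
        have h1' : u ≠ s := Ne.symm h1
        have h2' : u + 1 ≠ s := Ne.symm h2
        simp [h1', h2']
      have hbu' : Nat.testBit i' u = false := by
        rw [hi'def, Nat.testBit_xor, hmask, hbu]
        simp
      have hbu1' : Nat.testBit i' (u+1) = true := by
        rw [hi'def, Nat.testBit_xor, hmask, hbu1]
        simp
      have hcov : polarCovers n i i' :=
        Or.inr ⟨u, by omega, hbu, hbu1, hbu', hbu1',
          fun s h1 h2 => (hbits s h1 h2).symm⟩
      have hi'lt : i' < 2 ^ n := by
        apply Nat.lt_pow_two_of_testBit
        intro s hs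
        rw [hbits s (by omega) (by omega)]
        exact testBit_high hi hs
      have hlt : i < i' :=
        Nat.lt_of_testBit (u+1) hbu1 hbu1'
          (fun s hs => (hbits s (by omega) (by omega)).symm)
      have hinv : ∀ k, c1 n i' k ≤ c1 n j k := by
        intro k
        rw [c1_swap (by omega) hbu hbu1 hbu' hbu1'
          (fun s h1 h2 => (hbits s h1 h2).symm) k]
        by_cases hk : k = u + 1
        · rw [if_pos hk, hk]
          exact hsmax (u+1) (by omega) (by omega)
        · rw [if_neg hk]; simpa using hc k
      exact Relation.ReflTransGen.head hcov (ih i' j (by omega) hi'lt hj hinv)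

def cntGe {n : ℕ} (A : Finset (Fin n)) (k : ℕ) : ℕ :=
  (A.filter (fun a => k ≤ a.val)).card

lemma countP_le_of_forall₂_s1 {n : ℕ} {l₁ l₂ : List (Fin n)}
    (h : List.Forall₂ (· ≤ ·) l₁ l₂) (k : ℕ) :
    l₁.countP (fun a => decide (k ≤ a.val)) ≤ l₂.countP (fun a => decide (k ≤ a.val)) := by
  induction h with
  | nil => simp
  | @cons a b l₁' l₂' hab h' ih =>
    rw [List.countP_cons, List.countP_cons]
    have : k ≤ a.val → k ≤ b.val := fun h => le_trans h hab
    by_cases hk : k ≤ a.val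
    · simp [hk, this hk]; omega
    · simp only [hk, decide_false]
      by_cases hk2 : k ≤ b.val <;> simp [hk2] <;> omega

lemma cntGe_eq_countP_sort {n : ℕ} (A : Finset (Fin n)) (k : ℕ) :
    cntGe A k = (A.sort (· ≤ ·)).countP (fun a => decide (k ≤ a.val)) := by
  unfold cntGe
  rw [Finset.card, Finset.filter_val, ← Multiset.countP_eq_card_filter,
    ← Finset.sort_eq A (· ≤ ·), Multiset.coe_countP]

lemma forall₂_exists_le {n : ℕ} {l₁ l₂ : List (Fin n)}
    (h : List.Forall₂ (· ≤ ·) l₁ l₂) : ∀ b ∈ l₂, ∃ a ∈ l₁, a ≤ b := by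
  induction h with
  | nil => simp
  | @cons a b l₁' l₂' hab h' ih =>
    intro x hx
    rcases List.mem_cons.1 hx with rfl | hx
    · exact ⟨a, List.mem_cons_self, hab⟩
    · obtain ⟨y, hy, hyx⟩ := ih x hx
      exact ⟨y, List.mem_cons_of_mem _ hy, hyx⟩

lemma cntGe_erase_le {n : ℕ} (A : Finset (Fin n)) (a : Fin n) (k : ℕ) (hk : k ≤ a.val)
    (ha : a ∈ A) : cntGe (A.erase a) k = cntGe A k - 1 ∧ 1 ≤ cntGe A k := by
  unfold cntGe
  rw [Finset.filter_erase]
  have hmem : a ∈ A.filter (fun x => k ≤ x.val) := Finset.mem_filter.2 ⟨ha, hk⟩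
  rw [Finset.card_erase_of_mem hmem]
  exact ⟨rfl, Finset.card_pos.2 ⟨a, hmem⟩⟩

lemma cntGe_erase_gt {n : ℕ} (A : Finset (Fin n)) (a : Fin n) (k : ℕ) (hk : a.val < k) :
    cntGe (A.erase a) k = cntGe A k := by
  unfold cntGe
  rw [Finset.filter_erase, Finset.erase_eq_of_notMem]
  simp [Finset.mem_filter]
  omega

lemma cnt_to_monLE {n : ℕ} : ∀ (m : ℕ) (Q R : Finset (Fin n)), Q.card ≤ m →
    (∀ k, cntGe Q k ≤ cntGe R k) →
    ∃ R' ⊆ R, List.Forall₂ (· ≤ ·) (Q.sort (· ≤ ·)) (R'.sort (· ≤ ·)) := by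
  intro m
  induction m with
  | zero =>
    intro Q R hQ _
    have : Q = ∅ := Finset.card_eq_zero.1 (by omega)
    subst this
    exact ⟨∅, Finset.empty_subset R, by rw [Finset.sort_empty]; exact List.Forall₂.nil⟩
  | succ m ih =>
    intro Q R hQ hcnt
    rcases Q.eq_empty_or_nonempty with rfl | hQne
    · exact ⟨∅, Finset.empty_subset R, by rw [Finset.sort_empty]; exact List.Forall₂.nil⟩
    set q := Q.min' hQne with hqdef
    have hqQ : q ∈ Q := Q.min'_mem hQne
    have hqcnt : 1 ≤ cntGe Q q.val := (cntGe_erase_le Q q q.val le_rfl hqQ).2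
    have hFne : (R.filter (fun x => q.val ≤ x.val)).Nonempty := by
      rw [← Finset.card_pos]
      have h := hcnt q.val
      unfold cntGe at h hqcnt
      omega
    set r := (R.filter (fun x => q.val ≤ x.val)).min' hFne with hrdef
    have hrmem := (R.filter (fun x => q.val ≤ x.val)).min'_mem hFne
    rw [Finset.mem_filter] at hrmem
    obtain ⟨hrR, hqr⟩ := hrmem
    have hrmin : ∀ x ∈ R, q.val ≤ x.val → r ≤ x := by
      intro x hx hqx
      exact Finset.min'_le _ x (Finset.mem_filter.2 ⟨hx, hqx⟩)
    -- the invariant for the erased sets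
    have hinv : ∀ k, cntGe (Q.erase q) k ≤ cntGe (R.erase r) k := by
      intro k
      rcases le_or_gt k q.val with hkq | hkq
      · have h1 := cntGe_erase_le Q q k hkq hqQ
        have h2 := cntGe_erase_le R r k (le_trans hkq hqr) hrR
        have := hcnt k
        omega
      · rw [cntGe_erase_gt Q q k hkq]
        rcases le_or_gt k r.val with hkr | hkr
        · have h2 := cntGe_erase_le R r k hkr hrR
          -- need cntGe Q k + 1 ≤ cntGe R k
          have hsub1 : insert q (Q.filter (fun a => k ≤ a.val))
              ⊆ Q.filter (fun a => q.val ≤ a.val) := by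
            intro x hx
            rcases Finset.mem_insert.1 hx with rfl | hx
            · exact Finset.mem_filter.2 ⟨hqQ, le_rfl⟩
            · rw [Finset.mem_filter] at hx ⊢
              exact ⟨hx.1, by omega⟩
          have hnm : q ∉ Q.filter (fun a => k ≤ a.val) := by
            simp [Finset.mem_filter]
            omega
          have hc1 : cntGe Q k + 1 ≤ cntGe Q q.val := by
            have := Finset.card_le_card hsub1
            rw [Finset.card_insert_of_notMem hnm] at this
            exact this
          have hsub2 : R.filter (fun a => q.val ≤ a.val)
              ⊆ R.filter (fun a => k ≤ a.val) := by
            intro x hx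
            rw [Finset.mem_filter] at hx ⊢
            refine ⟨hx.1, ?_⟩
            have := hrmin x hx.1 hx.2
            rw [Fin.le_def] at this
            omega
          have hc2 : cntGe R q.val ≤ cntGe R k := Finset.card_le_card hsub2
          have := hcnt q.val
          unfold cntGe at *
          omega
        · rw [cntGe_erase_gt R r k hkr]
          exact hcnt k
    have hcard : (Q.erase q).card ≤ m := by
      have := Finset.card_erase_of_mem hqQ
      have := Finset.card_pos.2 hQne
      omega
    obtain ⟨R₁', hsub₁, hf₁⟩ := ih (Q.erase q) (R.erase r) hcard hinv
    -- every element of R₁' is strictly above r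
    have hrlt : ∀ x ∈ R₁', r ≤ x ∧ r ≠ x := by
      intro x hx
      have hxsort : x ∈ R₁'.sort (· ≤ ·) := (Finset.mem_sort _).2 hx
      obtain ⟨y, hy, hyx⟩ := forall₂_exists_le hf₁ x hxsort
      have hyQ : y ∈ Q.erase q := (Finset.mem_sort _).1 hy
      have hyne : y ≠ q := Finset.ne_of_mem_erase hyQ
      have hyQ' : y ∈ Q := Finset.mem_of_mem_erase hyQ
      have hqy : q ≤ y := Finset.min'_le Q y hyQ'
      have hxR : x ∈ R := Finset.mem_of_mem_erase (hsub₁ hx)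
      have hqx : q.val ≤ x.val := by
        rw [Fin.le_def] at hqy hyx
        omega
      refine ⟨hrmin x hxR hqx, ?_⟩
      exact fun h => Finset.ne_of_mem_erase (hsub₁ hx) h.symm
    have hrnm : r ∉ R₁' := fun h => (hrlt r h).2 rfl
    refine ⟨insert r R₁', ?_, ?_⟩
    · intro x hx
      rcases Finset.mem_insert.1 hx with rfl | hx
      · exact hrR
      · exact Finset.mem_of_mem_erase (hsub₁ hx)
    · have hsortR : (insert r R₁').sort (· ≤ ·) = r :: R₁'.sort (· ≤ ·) :=
        Finset.sort_insert _ (fun b hb => (hrlt b hb).1) hrnm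
      have hQeq : Q = insert q (Q.erase q) := (Finset.insert_erase hqQ).symm
      have hsortQ : Q.sort (· ≤ ·) = q :: (Q.erase q).sort (· ≤ ·) := by
        conv_lhs => rw [hQeq]
        exact Finset.sort_insert _
          (fun b hb => Finset.min'_le Q b (Finset.mem_of_mem_erase hb))
          (Finset.notMem_erase q Q)
      rw [hsortR, hsortQ]
      exact List.Forall₂.cons hqr hf₁

lemma monLE_iff_cnt {n : ℕ} (Q R : Finset (Fin n)) :
    monLE Q R ↔ ∀ k, cntGe Q k ≤ cntGe R k := by
  constructor
  · rintro ⟨R', hsub, hf⟩ k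
    calc cntGe Q k = (Q.sort (· ≤ ·)).countP (fun a => decide (k ≤ a.val)) :=
          cntGe_eq_countP_sort Q k
      _ ≤ (R'.sort (· ≤ ·)).countP (fun a => decide (k ≤ a.val)) :=
          countP_le_of_forall₂_s1 hf k
      _ = cntGe R' k := (cntGe_eq_countP_sort R' k).symm
      _ ≤ cntGe R k :=
          Finset.card_le_card (Finset.filter_subset_filter _ hsub)
  · intro h
    exact cnt_to_monLE Q.card Q R le_rfl h

/-- count of zero bits of `j` in `[k, n)` -/
lemma cntGe_varSet {n j : ℕ} (k : ℕ) :
    cntGe (varSet n j) k = ((Finset.Ico k n).filter (fun s => ¬ Nat.testBit j s)).card := by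
  unfold cntGe varSet
  apply Finset.card_bij (fun (a : Fin n) _ => a.val)
  · intro a ha
    simp only [Finset.mem_filter, Finset.mem_univ, true_and] at ha
    simp only [Finset.mem_filter, Finset.mem_Ico]
    exact ⟨⟨ha.2, a.isLt⟩, ha.1⟩
  · intro a _ b _ h
    exact Fin.val_injective h
  · intro s hs
    simp only [Finset.mem_filter, Finset.mem_Ico] at hs
    exact ⟨⟨s, hs.1.2⟩, by simp [Finset.mem_filter, hs.2, hs.1.1], rfl⟩

lemma c0_add_c1 {n j : ℕ} (k : ℕ) :
    ((Finset.Ico k n).filter (fun s => ¬ Nat.testBit j s)).card + c1 n j k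
      = (Finset.Ico k n).card := by
  unfold c1
  rw [add_comm]
  exact Finset.card_filter_add_card_filter_not _

lemma bridge {n i j : ℕ} (hi : i < 2 ^ n) (hj : j < 2 ^ n) :
    Relation.ReflTransGen (polarCovers n) i j ↔ monLE (varSet n j) (varSet n i) := by
  rw [monLE_iff_cnt]
  constructor
  · intro h k
    have hc := polar_c1 h k
    have h1 := cntGe_varSet (n := n) (j := i) k
    have h2 := cntGe_varSet (n := n) (j := j) k
    have h3 := c0_add_c1 (n := n) (j := i) k
    have h4 := c0_add_c1 (n := n) (j := j) k
    omega
  · intro h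
    apply c1_to_polar (2 ^ n) i j (by omega) hi hj
    intro k
    have hk := h k
    have h1 := cntGe_varSet (n := n) (j := i) k
    have h2 := cntGe_varSet (n := n) (j := j) k
    have h3 := c0_add_c1 (n := n) (j := i) k
    have h4 := c0_add_c1 (n := n) (j := j) k
    omega

/-- `I` is UPO-compliant: `i ⪯ j` (polar order) and `i ∈ I` imply `j ∈ I`. -/
def UPOCompliant (n : ℕ) (I : Set ℕ) : Prop :=
  ∀ i ∈ I, ∀ j < 2 ^ n, polarLE n i j → j ∈ I

/-- For `n ≥ 1` and `I ⊆ {0,…,2^n−1}`: `I` is UPO-compliant iff the generating monomial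
set `{m_t : t ∈ I}` is decreasing, i.e. `m_{t'} ⪯ m_t` and `t ∈ I` imply `t' ∈ I`. -/
theorem upoCompliant_iff_decreasing (n : ℕ) (hn : 1 ≤ n) (I : Set ℕ)
    (hI : ∀ i ∈ I, i < 2 ^ n) :
    UPOCompliant n I ↔
      ∀ t ∈ I, ∀ t' < 2 ^ n, monLE (varSet n t') (varSet n t) → t' ∈ I := by
  constructor
  · intro hU t ht t' ht' hm
    exact hU t ht t' ht' ((bridge (hI t ht) ht').2 hm)
  · intro hdec i hiI j hj hp
    exact hdec i hiI j hj ((bridge (hI i hiI) hj).1 hp)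
end

section
/- Every invertible lower-triangular matrix A ∈ 𝔽₂^{n×n} is a product of q row-addition elementary matrices, A = E_{i_1,j_1}·…·E_{i_q,j_q} with i_l > j_l for every l, where q is the number of nonzero entries of A below the diagonal; consequently every π_{(A,b)} ∈ LTA decomposes (as a composition of index maps) as π_{(A,b)} = π_{(Id,b)} ∘ π_{E_{i_1,j_1}} ∘ ⋯ ∘ π_{E_{i_q,j_q}} with i_l > j_l, i.e., as a translation composed with q elementary permutations with index below the diagonal. -/
/-- Integer corresponding to a binary vector (LSB first); inverse of `binExp`. -/
def vecToNat (n : ℕ) (v : Fin n → ZMod 2) : ℕ := ∑ t : Fin n, (v t).val * 2 ^ (t : ℕ)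

lemma sum_two_pow (n : ℕ) : ∑ i ∈ Finset.range n, 2 ^ i = 2 ^ n - 1 := by
  induction n with
  | zero => simp
  | succ k ih =>
      rw [Finset.sum_range_succ, ih]
      have h1 : 1 ≤ 2 ^ k := Nat.one_le_two_pow
      have h2 : 2 ^ (k + 1) = 2 ^ k * 2 := pow_succ 2 k
      omega

lemma vecToNat_lt (n : ℕ) (v : Fin n → ZMod 2) : vecToNat n v < 2 ^ n := by
  have h2 : vecToNat n v ≤ ∑ t : Fin n, 1 * 2 ^ (t : ℕ) := by
    refine Finset.sum_le_sum fun t _ => Nat.mul_le_mul_right _ ?_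
    have : (v t).val < 2 := ZMod.val_lt (v t)
    omega
  have h3 : ∑ t : Fin n, 1 * 2 ^ (t : ℕ) = ∑ t ∈ Finset.range n, 2 ^ t := by
    simp [Fin.sum_univ_eq_sum_range]
  have h4 := sum_two_pow n
  have h5 : 1 ≤ 2 ^ n := Nat.one_le_two_pow
  unfold vecToNat at *
  omega

/-- The permutation `π_{(A,b)}` of `{0,…,2^n−1}` induced by the affine transformation
`v ↦ A·v + b`, i.e. the map determined by `bin (π_{(A,b)} i) = A · bin i + b`. -/
def affinePerm (n : ℕ) (A : Matrix (Fin n) (Fin n) (ZMod 2)) (b : Fin n → ZMod 2)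
    (i : Fin (2 ^ n)) : Fin (2 ^ n) :=
  ⟨vecToNat n (A.mulVec (binExp n i) + b), vecToNat_lt n _⟩


/-- Elementary row-addition matrix `E_{i,j}`: identity plus an extra `1` in row `i`,
column `j`. -/
def elemMat (n : ℕ) (i j : Fin n) : Matrix (Fin n) (Fin n) (ZMod 2) :=
  1 + Matrix.single i j 1

lemma zmod2_cases (x : ZMod 2) : x = 0 ∨ x = 1 := by revert x; decide

lemma vecToNat_succ (n : ℕ) (v : Fin (n+1) → ZMod 2) :
    vecToNat (n+1) v = (v 0).val + 2 * vecToNat n (fun t => v t.succ) := by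
  unfold vecToNat
  rw [Fin.sum_univ_succ, Finset.mul_sum]
  simp only [Fin.val_zero, pow_zero, mul_one, Fin.val_succ]
  congr 1
  apply Finset.sum_congr rfl; intro t _; ring

lemma binExp_vecToNat (n : ℕ) (v : Fin n → ZMod 2) : binExp n (vecToNat n v) = v := by
  induction n with
  | zero => funext t; exact t.elim0
  | succ m ih =>
    funext t
    have hv : (v 0).val < 2 := ZMod.val_lt _
    rw [vecToNat_succ]
    refine Fin.cases ?_ ?_ t
    · show (if Nat.testBit ((v 0).val + 2 * vecToNat m fun t => v t.succ) 0 then (1:ZMod 2) else 0) = v 0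
      rw [Nat.testBit_zero]
      rcases zmod2_cases (v 0) with h | h <;>
        simp [h, ZMod.val_one, Nat.add_mul_mod_self_left]
    · intro s
      show (if Nat.testBit ((v 0).val + 2 * vecToNat m fun t => v t.succ) (s+1) then (1:ZMod 2) else 0) = v s.succ
      rw [Nat.testBit_succ]
      have hdiv : ((v 0).val + 2 * vecToNat m fun t => v t.succ) / 2 = vecToNat m fun t => v t.succ := by
        omega
      rw [hdiv]
      have := congrFun (ih (fun t => v t.succ)) s
      exact this

def vtn (n : ℕ) (v : Fin n → ZMod 2) : Fin (2 ^ n) := ⟨vecToNat n v, vecToNat_lt n v⟩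

lemma vtn_bij (n : ℕ) : Function.Bijective (vtn n) := by
  have hinj : Function.Injective (vtn n) := by
    intro v w h
    have h' : vecToNat n v = vecToNat n w := congrArg Fin.val h
    have : binExp n (vecToNat n v) = binExp n (vecToNat n w) := by rw [h']
    rwa [binExp_vecToNat, binExp_vecToNat] at this
  refine (Fintype.bijective_iff_injective_and_card _).2 ⟨hinj, ?_⟩
  simp [Fintype.card_fun]

lemma vecToNat_binExp (n : ℕ) (i : Fin (2 ^ n)) : vtn n (binExp n i) = i := by
  obtain ⟨v, hv⟩ := (vtn_bij n).2 i
  rw [← hv]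
  have : binExp n (vtn n v : ℕ) = v := binExp_vecToNat n v
  rw [this]

lemma binExp_affinePerm (n : ℕ) (A : Matrix (Fin n) (Fin n) (ZMod 2)) (b : Fin n → ZMod 2)
    (i : Fin (2 ^ n)) : binExp n (affinePerm n A b i : ℕ) = A.mulVec (binExp n i) + b :=
  binExp_vecToNat n _

lemma affinePerm_eq_vtn (n : ℕ) (A : Matrix (Fin n) (Fin n) (ZMod 2)) (b : Fin n → ZMod 2)
    (i : Fin (2 ^ n)) : affinePerm n A b i = vtn n (A.mulVec (binExp n i) + b) := rfl

lemma affinePerm_comp (n : ℕ) (M M' : Matrix (Fin n) (Fin n) (ZMod 2)) :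
    affinePerm n M 0 ∘ affinePerm n M' 0 = affinePerm n (M * M') 0 := by
  funext i
  simp only [Function.comp_apply, affinePerm_eq_vtn]
  congr 1
  rw [add_zero, add_zero, add_zero]
  have : binExp n ((vtn n (M'.mulVec (binExp n i)) : Fin (2^n)) : ℕ) = M'.mulVec (binExp n i) :=
    binExp_vecToNat n _
  rw [this, Matrix.mulVec_mulVec]

lemma affinePerm_one_zero (n : ℕ) : affinePerm n 1 0 = id := by
  funext i
  simp only [affinePerm_eq_vtn, Matrix.one_mulVec, add_zero, id_eq]
  exact vecToNat_binExp n i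

lemma affinePerm_split (n : ℕ) (A : Matrix (Fin n) (Fin n) (ZMod 2)) (b : Fin n → ZMod 2) :
    affinePerm n A b = affinePerm n 1 b ∘ affinePerm n A 0 := by
  funext i
  simp only [Function.comp_apply, affinePerm_eq_vtn]
  congr 1
  have : binExp n ((vtn n (A.mulVec (binExp n i) + 0) : Fin (2^n)) : ℕ) = A.mulVec (binExp n i) + 0 :=
    binExp_vecToNat n _
  rw [this, add_zero, Matrix.one_mulVec]

lemma affinePerm_foldr (n : ℕ) (L : List (Matrix (Fin n) (Fin n) (ZMod 2))) :
    (L.map (fun M => affinePerm n M 0)).foldr (· ∘ ·) id = affinePerm n L.prod 0 := by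
  induction L with
  | nil => simp [affinePerm_one_zero]
  | cons M tl ih =>
    simp only [List.map_cons, List.foldr_cons, List.prod_cons, ih]
    exact affinePerm_comp n M tl.prod

lemma prod_elemMat (n : ℕ) (L : List (Fin n × Fin n))
    (hp : L.Pairwise (fun p q =>
      Matrix.single p.1 p.2 (1 : ZMod 2) * Matrix.single q.1 q.2 1 = 0)) :
    (L.map (fun p => elemMat n p.1 p.2)).prod =
      1 + (L.map (fun p => Matrix.single p.1 p.2 (1 : ZMod 2))).sum := by
  induction L with
  | nil => simp
  | cons hd tl ih =>
    rw [List.pairwise_cons] at hp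
    rw [List.map_cons, List.prod_cons, ih hp.2, List.map_cons, List.sum_cons]
    have hz : Matrix.single hd.1 hd.2 (1 : ZMod 2) *
        (tl.map (fun p => Matrix.single p.1 p.2 (1 : ZMod 2))).sum = 0 := by
      rw [← List.sum_map_mul_left]
      apply List.sum_eq_zero
      intro x hx
      rw [List.mem_map] at hx
      obtain ⟨q, hq, rfl⟩ := hx
      exact hp.1 q hq
    unfold elemMat
    rw [add_mul, one_mul, mul_add, mul_one, hz, add_zero]
    abel

lemma diag_one (n : ℕ) (A : Matrix (Fin n) (Fin n) (ZMod 2)) (hA : IsUnit A)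
    (hlow : ∀ i j : Fin n, i < j → A i j = 0) (i : Fin n) : A i i = 1 := by
  have hbt : A.BlockTriangular OrderDual.toDual := by
    intro a b h
    exact hlow a b h
  have hdet : A.det = ∏ k : Fin n, A k k := Matrix.det_of_lowerTriangular A hbt
  have hu : IsUnit A.det := (Matrix.isUnit_iff_isUnit_det A).1 hA
  have hne : A.det ≠ 0 := hu.ne_zero
  rw [hdet] at hne
  have : A i i ≠ 0 := fun h => hne (Finset.prod_eq_zero (Finset.mem_univ i) h)
  rcases zmod2_cases (A i i) with h | h
  · exact absurd h this
  · exact h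

lemma A_decomp (n : ℕ) (A : Matrix (Fin n) (Fin n) (ZMod 2)) (hA : IsUnit A)
    (hlow : ∀ i j : Fin n, i < j → A i j = 0) :
    A = 1 + ∑ p ∈ Finset.univ.filter (fun p : Fin n × Fin n => p.2 < p.1 ∧ A p.1 p.2 ≠ 0),
        Matrix.single p.1 p.2 (1 : ZMod 2) := by
  ext i j
  rw [Matrix.add_apply, Matrix.sum_apply]
  have hconv : ∀ p : Fin n × Fin n, Matrix.single p.1 p.2 (1 : ZMod 2) i j
      = if p = (i, j) then (1 : ZMod 2) else 0 := by
    intro p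
    simp only [Matrix.single, Matrix.of_apply, Prod.ext_iff]
  rw [Finset.sum_congr rfl (fun p _ => hconv p), Finset.sum_ite_eq'
    (Finset.univ.filter (fun p : Fin n × Fin n => p.2 < p.1 ∧ A p.1 p.2 ≠ 0)) (i, j)
    (fun _ => (1 : ZMod 2))]
  simp only [Finset.mem_filter, Finset.mem_univ, true_and]
  rcases lt_trichotomy i j with h | h | h
  · rw [hlow i j h, Matrix.one_apply_ne (Fin.ne_of_lt h)]
    simp
  · subst h
    rw [Matrix.one_apply_eq, diag_one n A hA hlow i]
    simp
  · rw [Matrix.one_apply_ne (Fin.ne_of_gt h)]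
    by_cases hz : A i j = 0
    · rw [hz]; simp
    · rw [if_pos ⟨h, hz⟩, zero_add]
      rcases zmod2_cases (A i j) with h0 | h1
      · exact absurd h0 hz
      · exact h1

/-- Every invertible lower-triangular `A` is a product of `q` row-addition elementary
matrices `E_{i_l,j_l}` with `i_l > j_l`, where `q` is the number of nonzero entries of `A`
below the diagonal; consequently `π_{(A,b)} = π_{(Id,b)} ∘ π_{E_{i_1,j_1}} ∘ ⋯ ∘ π_{E_{i_q,j_q}}`. -/
theorem lta_elementary_decomposition (n : ℕ) (A : Matrix (Fin n) (Fin n) (ZMod 2))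
    (hA : IsUnit A) (hlow : ∀ i j : Fin n, i < j → A i j = 0) (b : Fin n → ZMod 2) :
    ∃ (q : ℕ) (ij : Fin q → Fin n × Fin n),
      q = (Finset.univ.filter (fun p : Fin n × Fin n => p.2 < p.1 ∧ A p.1 p.2 ≠ 0)).card ∧
      (∀ l, (ij l).2 < (ij l).1) ∧
      A = (List.ofFn (fun l => elemMat n (ij l).1 (ij l).2)).prod ∧
      affinePerm n A b =
        affinePerm n 1 b ∘
          (List.ofFn (fun l => affinePerm n (elemMat n (ij l).1 (ij l).2) 0)).foldr
            (· ∘ ·) id := by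
  classical
  set Sset := Finset.univ.filter (fun p : Fin n × Fin n => p.2 < p.1 ∧ A p.1 p.2 ≠ 0) with hSset
  set g : Fin n × Fin n → Lex (Fin n × Fin n) := fun p => toLex (p.2, p.1) with hg
  set h : Lex (Fin n × Fin n) → Fin n × Fin n := fun x => ((ofLex x).2, (ofLex x).1) with hh
  have hginj : Function.Injective g := by
    intro p q hpq
    have h1 : ((p.2, p.1) : Fin n × Fin n) = (q.2, q.1) := hpq
    have h2 := congrArg Prod.fst h1
    have h3 := congrArg Prod.snd h1
    exact Prod.ext h3 h2
  have hhinj : Function.Injective h := by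
    intro x y hxy
    have h2 := congrArg Prod.fst hxy
    have h3 := congrArg Prod.snd hxy
    exact Prod.ext h3 h2
  set T : List (Lex (Fin n × Fin n)) := (Sset.image g).sort (· ≤ ·) with hT
  set L : List (Fin n × Fin n) := T.map h with hL
  have hlen : L.length = Sset.card := by
    rw [hL, List.length_map, hT, Finset.length_sort, Finset.card_image_of_injective _ hginj]
  have hLfin : L.toFinset = Sset := by
    rw [hL]
    have h1 : (T.map h).toFinset = T.toFinset.image h := by
      ext x; simp [List.mem_toFinset, List.mem_map]
    rw [h1, hT, Finset.sort_toFinset, Finset.image_image]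
    have : h ∘ g = id := by funext p; rfl
    rw [this, Finset.image_id]
  have hmem : ∀ p ∈ L, p.2 < p.1 ∧ A p.1 p.2 ≠ 0 := by
    intro p hp
    have : p ∈ Sset := hLfin ▸ List.mem_toFinset.2 hp
    exact (Finset.mem_filter.1 this).2
  have hnodup : L.Nodup := (Finset.sort_nodup _ _).map hhinj
  have hsorted : L.Pairwise (fun p q => p.2 ≤ q.2) := by
    have hs : T.Pairwise (· ≤ ·) := Finset.pairwise_sort _ _
    refine List.Pairwise.map h ?_ hs
    intro x y hxy
    rcases Prod.Lex.le_iff.1 hxy with h1 | ⟨h1, _⟩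
    · exact le_of_lt h1
    · exact le_of_eq h1
  have hpz : L.Pairwise (fun p q =>
      Matrix.single p.1 p.2 (1 : ZMod 2) * Matrix.single q.1 q.2 1 = 0) := by
    refine List.Pairwise.imp_of_mem ?_ hsorted
    intro p q hp hq hle
    have hne : p.2 ≠ q.1 := Fin.ne_of_lt (lt_of_le_of_lt hle (hmem q hq).1)
    exact Matrix.single_mul_single_of_ne (h := hne) ..
  have hsum : (L.map (fun p => Matrix.single p.1 p.2 (1 : ZMod 2))).sum =
      ∑ p ∈ Sset, Matrix.single p.1 p.2 (1 : ZMod 2) := by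
    rw [← hLfin, List.sum_toFinset _ hnodup]
  have hAprod : A = (L.map (fun p => elemMat n p.1 p.2)).prod := by
    rw [prod_elemMat n L hpz, hsum, ← A_decomp n A hA hlow]
  refine ⟨L.length, L.get, hlen, ?_, ?_, ?_⟩
  · intro l
    have : L.get l ∈ L := List.get_mem L l
    exact (hmem _ this).1
  · rw [show List.ofFn (fun l => elemMat n (L.get l).1 (L.get l).2) = L.map (fun p => elemMat n p.1 p.2)
      from List.ofFn_getElem_eq_map L (fun p => elemMat n p.1 p.2)]
    exact hAprod
  · rw [show List.ofFn (fun l => affinePerm n (elemMat n (L.get l).1 (L.get l).2) 0) =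
      L.map (fun p => affinePerm n (elemMat n p.1 p.2) 0) from
      List.ofFn_getElem_eq_map L (fun p => affinePerm n (elemMat n p.1 p.2) 0)]
    have : L.map (fun p => affinePerm n (elemMat n p.1 p.2) 0) =
        (L.map (fun p => elemMat n p.1 p.2)).map (fun M => affinePerm n M 0) := by
      simp [List.map_map, Function.comp]
    rw [this, affinePerm_foldr, ← hAprod, ← affinePerm_split]
end

section
/- If I ⊆ {0,…,2^n−1} is UPO-compliant, then every translation permutation π_{(Id_n, b)}, b ∈ 𝔽₂^n, is an automorphism of the code C(I). -/
/-- The negative monomial `m_t = ∏_{i : bin(t)_i = 0} (1 + V_i)` as a boolean function. -/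
def negMonomial (n : ℕ) (t : ℕ) : (Fin n → ZMod 2) → ZMod 2 :=
  fun v => ∏ i ∈ Finset.univ.filter (fun i : Fin n => ¬ Nat.testBit t i), (1 + v i)

/-- Evaluation vector of a boolean function: `eval(f) = (f(bin 0),…,f(bin (2^n−1)))`. -/
def evalFun (n : ℕ) (f : (Fin n → ZMod 2) → ZMod 2) : Fin (2 ^ n) → ZMod 2 :=
  fun i => f (binExp n i)

/-- The monomial (polar) code `C(I)`: the `𝔽₂`-span of `{eval(m_t) : t ∈ I}`. -/
def code (n : ℕ) (I : Set ℕ) : Submodule (ZMod 2) (Fin (2 ^ n) → ZMod 2) :=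
  Submodule.span (ZMod 2) {x | ∃ t ∈ I, x = evalFun n (negMonomial n t)}

/-- `π` is an automorphism of the code `C`: `(x_{π(0)},…,x_{π(N−1)}) ∈ C` for all `x ∈ C`. -/
def IsCodeAut {N : ℕ} (C : Set (Fin N → ZMod 2)) (π : Fin N → Fin N) : Prop :=
  ∀ x ∈ C, (fun i => x (π i)) ∈ C


lemma testBit_vecToNat (n : ℕ) (v : Fin n → ZMod 2) (k : Fin n) :
    Nat.testBit (vecToNat n v) k = decide ((v k).val = 1) := by
  induction n with
  | zero => exact k.elim0
  | succ m ih =>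
    rw [vecToNat_succ]
    have hv : (v 0).val < 2 := ZMod.val_lt _
    cases k using Fin.cases with
    | zero =>
      simp only [Fin.val_zero, Nat.testBit_zero]
      have : ((v 0).val + 2 * vecToNat m (fun t => v t.succ)) % 2 = (v 0).val := by omega
      rw [this]
    | succ j =>
      have h1 : ((j.succ : Fin (m+1)) : ℕ) = (j : ℕ) + 1 := rfl
      rw [h1, Nat.testBit_succ]
      have hdiv : ((v 0).val + 2 * vecToNat m (fun t => v t.succ)) / 2 = vecToNat m (fun t => v t.succ) := by omega
      rw [hdiv, ih]

lemma le_of_bits_le {i j : ℕ} (h : ∀ s, Nat.testBit i s = true → Nat.testBit j s = true) :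
    i ≤ j := by
  have : i &&& j = i := by
    apply Nat.eq_of_testBit_eq
    intro s
    rw [Nat.testBit_and]
    cases hs : Nat.testBit i s
    · simp
    · simp [h s hs]
  calc i = i &&& j := this.symm
    _ ≤ j := Nat.and_le_right

lemma polarLE_of_bits_le (n : ℕ) (d : ℕ) : ∀ i j : ℕ, j - i ≤ d → j < 2 ^ n →
    (∀ s, Nat.testBit i s = true → Nat.testBit j s = true) → polarLE n i j := by
  induction d with
  | zero =>
    intro i j hd _ h
    have := le_of_bits_le h
    have : i = j := by omega
    exact this ▸ Relation.ReflTransGen.refl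
  | succ d ih =>
    intro i j hd hj h
    by_cases heq : i = j
    · exact heq ▸ Relation.ReflTransGen.refl
    · have hne : ∃ s, Nat.testBit i s ≠ Nat.testBit j s := by
        by_contra hc
        push_neg at hc
        exact heq (Nat.eq_of_testBit_eq fun s => hc s)
      obtain ⟨s, hs⟩ := hne
      have his : Nat.testBit i s = false := by
        cases hb : Nat.testBit i s
        · rfl
        · exact absurd (h s hb) (by rw [hb] at hs; simpa using hs.symm)
      have hjs : Nat.testBit j s = true := by
        cases hb : Nat.testBit j s
        · rw [his, hb] at hs; simp at hs
        · rfl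
      have hsn : s < n := by
        by_contra hsn
        push_neg at hsn
        have : j < 2 ^ s := lt_of_lt_of_le hj (Nat.pow_le_pow_right (by norm_num) hsn)
        rw [Nat.testBit_lt_two_pow this] at hjs
        simp at hjs
      set i' := i ||| 2 ^ s with hi'
      have hbit : ∀ k, Nat.testBit i' k = (Nat.testBit i k || decide (k = s)) := by
        intro k
        rw [Nat.testBit_lor]
        congr 1
        by_cases hk : k = s
        · subst hk; simp [Nat.testBit_two_pow_self]
        · simp [Nat.testBit_two_pow_of_ne (Ne.symm hk), hk]
      have hcov : polarCovers n i i' := by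
        left
        exact ⟨s, hsn, his, by simp [hbit], fun u hu => by simp [hbit, hu]⟩
      have hdom : ∀ u, Nat.testBit i' u = true → Nat.testBit j u = true := by
        intro u hu
        rw [hbit] at hu
        rcases Bool.or_eq_true_iff.mp hu with h1 | h1
        · exact h u h1
        · have : u = s := of_decide_eq_true h1
          exact this ▸ hjs
      have hii' : i < i' := by
        have h1 : i ≤ i' := le_of_bits_le fun k hk => by simp [hbit, hk]
        have h2 : i ≠ i' := fun hE => by
          have := hbit s
          rw [← hE, his] at this
          simp at this
        omega
      have hi'j : i' ≤ j := le_of_bits_le hdom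
      exact Relation.ReflTransGen.head hcov (ih i' j (by omega) hj hdom)

lemma zmod2_eq_zero_of_ne_one {x : ZMod 2} (h : x ≠ 1) : x = 0 := by
  have hv : x.val < 2 := ZMod.val_lt _
  interval_cases hx : x.val
  · exact (ZMod.val_eq_zero _).mp hx
  · exact absurd ((ZMod.val_eq_one one_lt_two _).mp hx) h

lemma gen_mem (n : ℕ) (I : Set ℕ) (hI : ∀ i ∈ I, i < 2 ^ n)
    (hUPO : UPOCompliant n I) (b : Fin n → ZMod 2) (t : ℕ) (ht : t ∈ I) :
    (fun i => evalFun n (negMonomial n t) (affinePerm n 1 b i)) ∈ code n I := by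
  classical
  set Z : Finset (Fin n) := Finset.univ.filter (fun i : Fin n => ¬ Nat.testBit t i) with hZ
  set Z1 : Finset (Fin n) := Z.filter (fun i => b i = 1) with hZ1
  set Z0 : Finset (Fin n) := Z.filter (fun i => ¬ b i = 1) with hZ0
  -- the shifted index for each subset S ⊆ Z1
  set tS : Finset (Fin n) → ℕ :=
    fun S => vecToNat n (fun i => if i ∈ Z0 ∪ S then 0 else 1) with htS
  -- each shifted index is in I
  have htSmem : ∀ S ∈ Z1.powerset, tS S ∈ I := by
    intro S hS
    rw [Finset.mem_powerset] at hS
    apply hUPO t ht _ (vecToNat_lt n _)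
    apply polarLE_of_bits_le n (tS S - t) _ _ le_rfl (vecToNat_lt n _)
    intro s hs
    have hsn : s < n := by
      by_contra hsn
      push_neg at hsn
      have : t < 2 ^ s := lt_of_lt_of_le (hI t ht) (Nat.pow_le_pow_right (by norm_num) hsn)
      rw [Nat.testBit_lt_two_pow this] at hs
      simp at hs
    have hkey := testBit_vecToNat n (fun i => if i ∈ Z0 ∪ S then 0 else 1) ⟨s, hsn⟩
    have hnotin : (⟨s, hsn⟩ : Fin n) ∉ Z0 ∪ S := by
      intro hin
      have hinZ : (⟨s, hsn⟩ : Fin n) ∈ Z := by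
        rcases Finset.mem_union.mp hin with h1 | h1
        · exact (Finset.mem_filter.mp h1).1
        · exact (Finset.mem_filter.mp (hS h1)).1
      rw [hZ, Finset.mem_filter] at hinZ
      exact hinZ.2 (by simpa using hs)
    rw [if_neg hnotin] at hkey
    have hcast : ((⟨s, hsn⟩ : Fin n) : ℕ) = s := rfl
    rw [hcast] at hkey
    simp only [htS]
    rw [hkey]
    simp [ZMod.val_one]
  -- negMonomial of shifted index
  have htSeval : ∀ S ∈ Z1.powerset, ∀ v : Fin n → ZMod 2,
      negMonomial n (tS S) v = ∏ i ∈ Z0 ∪ S, (1 + v i) := by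
    intro S hS v
    unfold negMonomial
    congr 1
    ext i
    simp only [Finset.mem_filter, Finset.mem_univ, true_and]
    rw [testBit_vecToNat n _ i]
    by_cases hin : i ∈ Z0 ∪ S <;> simp [hin, ZMod.val_one]
  -- pointwise expansion
  have hpoint : ∀ v : Fin n → ZMod 2,
      negMonomial n t (v + b) = ∑ S ∈ Z1.powerset, negMonomial n (tS S) v := by
    intro v
    have hsplit : negMonomial n t (v + b)
        = (∏ i ∈ Z1, ((v + b) i + 1)) * ∏ i ∈ Z0, (1 + (v + b) i) := by
      unfold negMonomial
      rw [← Finset.prod_filter_mul_prod_filter_not Z (fun i => b i = 1) (fun i => 1 + (v + b) i)]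
      rw [← hZ1, ← hZ0]
      congr 1
      exact Finset.prod_congr rfl fun i _ => by ring
    rw [hsplit]
    have hZ1prod : ∏ i ∈ Z1, ((v + b) i + 1) = ∑ S ∈ Z1.powerset, ∏ i ∈ S, (1 + v i) := by
      have : ∀ i ∈ Z1, (v + b) i + 1 = (1 + v i) + 1 := by
        intro i hi
        have hb : b i = 1 := (Finset.mem_filter.mp hi).2
        rw [Pi.add_apply, hb]
        ring
      rw [Finset.prod_congr rfl this, Finset.prod_add]
      exact Finset.sum_congr rfl fun S _ => by simp
    have hZ0prod : ∀ i ∈ Z0, (1 + (v + b) i) = 1 + v i := by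
      intro i hi
      have hb : b i = 0 := zmod2_eq_zero_of_ne_one (Finset.mem_filter.mp hi).2
      simp [Pi.add_apply, hb]
    rw [hZ1prod, Finset.prod_congr rfl hZ0prod, Finset.sum_mul]
    apply Finset.sum_congr rfl
    intro S hS
    have hdisj : Disjoint Z0 S := by
      rw [Finset.mem_powerset] at hS
      apply Finset.disjoint_left.mpr
      intro a ha1 ha2
      have h1 : b a = 1 := (Finset.mem_filter.mp (hS ha2)).2
      exact (Finset.mem_filter.mp ha1).2 h1
    rw [htSeval S hS v, Finset.prod_union hdisj]
    ring
  -- the permuted generator as a sum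
  have hfun : (fun i => evalFun n (negMonomial n t) (affinePerm n 1 b i))
      = ∑ S ∈ Z1.powerset, evalFun n (negMonomial n (tS S)) := by
    funext i
    rw [Finset.sum_apply]
    unfold evalFun affinePerm
    simp only [Matrix.one_mulVec]
    rw [binExp_vecToNat]
    exact hpoint (binExp n i)
  rw [hfun]
  apply Submodule.sum_mem
  intro S hS
  exact Submodule.subset_span ⟨tS S, htSmem S hS, rfl⟩


/-- If `I` is UPO-compliant then every translation permutation `π_{(Id,b)}` is an
automorphism of `C(I)`. -/
theorem translation_is_automorphism (n : ℕ) (I : Set ℕ) (hI : ∀ i ∈ I, i < 2 ^ n)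
    (hUPO : UPOCompliant n I) (b : Fin n → ZMod 2) :
    IsCodeAut (code n I : Set (Fin (2 ^ n) → ZMod 2)) (affinePerm n 1 b) := by
  intro x hx
  have hle : code n I ≤ (code n I).comap
      (LinearMap.funLeft (ZMod 2) (ZMod 2) (affinePerm n 1 b)) := by
    apply Submodule.span_le.2
    rintro y ⟨t, ht, rfl⟩
    rw [SetLike.mem_coe, Submodule.mem_comap]
    exact gen_mem n I hI hUPO b t ht
  exact hle hx
end

section
/- For a composition S = (s_1,…,s_l) of n, the number of pairs (A,b) with A ∈ BLTL(S) and b ∈ 𝔽₂^n equals 2^{n(n+1)/2} · ∏_{i=1}^{l} ∏_{j=2}^{s_i} (2^j − 1), where an inner product over an empty range (i.e., when s_i = 1) equals 1. -/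
/-- `r` and `c` lie in the same diagonal block of the profile `S = (s_1,…,s_l)`. -/
def sameBlock (S : List ℕ) (r c : ℕ) : Prop :=
  ∃ k, (S.take k).sum ≤ r ∧ r < (S.take (k + 1)).sum ∧
    (S.take k).sum ≤ c ∧ c < (S.take (k + 1)).sum

/-- `A` is block lower triangular of profile `S`: `A r c = 0` whenever `c > r` and
`r`, `c` do not lie in the same diagonal block. -/
def IsBLT (n : ℕ) (S : List ℕ) (A : Matrix (Fin n) (Fin n) (ZMod 2)) : Prop :=
  ∀ r c : Fin n, (r : ℕ) < (c : ℕ) → ¬ sameBlock S (r : ℕ) (c : ℕ) → A r c = 0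


lemma sameBlock_cons_low {s : ℕ} (S' : List ℕ) {r c : ℕ} (hr : r < s) (hc : c < s) :
    sameBlock (s :: S') r c :=
  ⟨0, by simp [hr, hc]⟩

lemma not_sameBlock_cons {s : ℕ} (S' : List ℕ) {r c : ℕ} (hr : r < s) (hc : s ≤ c) :
    ¬ sameBlock (s :: S') r c := by
  rintro ⟨k, h1, h2, h3, h4⟩
  cases k with
  | zero => simp at h4; omega
  | succ k => simp [List.take_succ_cons] at h1; omega

lemma sameBlock_cons_shift {s : ℕ} (S' : List ℕ) (i j : ℕ) :
    sameBlock (s :: S') (s + i) (s + j) ↔ sameBlock S' i j := by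
  constructor
  · rintro ⟨k, h1, h2, h3, h4⟩
    cases k with
    | zero => simp at h2
    | succ k =>
      refine ⟨k, ?_, ?_, ?_, ?_⟩ <;> simp [List.take_succ_cons] at h1 h2 h3 h4 <;> omega
  · rintro ⟨k, h1, h2, h3, h4⟩
    exact ⟨k + 1, by simp [List.take_succ_cons]; omega⟩

-- arithmetic helpers
lemma evenp (n : ℕ) : 2 ∣ n * (n - 1) := by
  cases n with
  | zero => simp
  | succ k => simpa [Nat.mul_comm] using (Nat.even_mul_succ_self k).two_dvd

lemma tri_add (a b : ℕ) : (a + b) * (a + b - 1) / 2 = a * (a - 1) / 2 + a * b + b * (b - 1) / 2 := by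
  obtain ⟨x, hx⟩ := evenp a
  obtain ⟨y, hy⟩ := evenp b
  obtain ⟨z, hz⟩ := evenp (a + b)
  have key : 2 * z = 2 * x + 2 * (a * b) + 2 * y := by
    rw [← hx, ← hy, ← hz]
    rcases a with _ | a
    · simp
    rcases b with _ | b
    · simp
    simp only [Nat.succ_sub_one, Nat.add_sub_cancel]
    have : a + 1 + (b + 1) - 1 = a + b + 1 := by omega
    rw [this]; ring
  rw [hx, hy, hz, Nat.mul_div_cancel_left _ two_pos, Nat.mul_div_cancel_left _ two_pos,
    Nat.mul_div_cancel_left _ two_pos]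
  omega

lemma tri_succ (n : ℕ) : n * (n - 1) / 2 + n = n * (n + 1) / 2 := by
  have := tri_add n 1
  simpa [Nat.mul_comm] using this.symm

lemma prod_pow_sub (s : ℕ) :
    ∏ i ∈ Finset.range s, (2 ^ s - 2 ^ i) =
      2 ^ (s * (s - 1) / 2) * ∏ j ∈ Finset.Icc 2 s, (2 ^ j - 1) := by
  have step : ∀ i ∈ Finset.range s, (2 ^ s - 2 ^ i : ℕ) = 2 ^ i * (2 ^ (s - i) - 1) := by
    intro i hi
    rw [Finset.mem_range] at hi
    rw [Nat.mul_sub, Nat.mul_one, ← pow_add]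
    have : i + (s - i) = s := by omega
    rw [this]
  rw [Finset.prod_congr rfl step, Finset.prod_mul_distrib, Finset.prod_pow_eq_pow_sum,
    Finset.sum_range_id]
  congr 1
  have h1 : ∏ i ∈ Finset.range s, (2 ^ (s - i) - 1) = ∏ i ∈ Finset.range s, (2 ^ (i + 1) - 1) := by
    rw [← Finset.prod_range_reflect]
    refine Finset.prod_congr rfl fun i hi => ?_
    rw [Finset.mem_range] at hi
    congr 2
    omega
  rw [h1]
  have h2 : ∏ j ∈ Finset.Icc 1 s, (2 ^ j - 1) = ∏ i ∈ Finset.range s, (2 ^ (i + 1) - 1) := by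
    rw [← Finset.Ico_add_one_right_eq_Icc, Finset.prod_Ico_eq_prod_range]
    simp [Nat.add_comm]
  rw [← h2]
  have h3 : Finset.Icc 2 s = Finset.Ioc 1 s := by ext x; simp; omega
  rw [h3]
  rcases Nat.eq_zero_or_pos s with rfl | hs
  · simp
  · rw [Finset.Icc_eq_cons_Ioc hs, Finset.prod_cons]
    simp
noncomputable def unitsEquivIsUnitSub (M : Type*) [Monoid M] : Mˣ ≃ {a : M // IsUnit a} where
  toFun u := ⟨u, u.isUnit⟩
  invFun a := a.2.unit
  left_inv u := Units.ext u.isUnit.unit_spec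
  right_inv a := Subtype.ext a.2.unit_spec

lemma gl_card (s : ℕ) :
    Nat.card {B : Matrix (Fin s) (Fin s) (ZMod 2) // IsUnit B} =
      2 ^ (s * (s - 1) / 2) * ∏ j ∈ Finset.Icc 2 s, (2 ^ j - 1) := by
  have e : GL (Fin s) (ZMod 2) ≃ {B : Matrix (Fin s) (Fin s) (ZMod 2) // IsUnit B} :=
    unitsEquivIsUnitSub _
  rw [← Nat.card_congr e, Matrix.card_GL_field, ← prod_pow_sub s, ZMod.card,
    ← Fin.prod_univ_eq_prod_range]

open Matrix in
lemma blt_reindex_iff {s m : ℕ} (S' : List ℕ)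
    (A' : Matrix (Fin s ⊕ Fin m) (Fin s ⊕ Fin m) (ZMod 2)) :
    IsBLT (s + m) (s :: S') (reindex finSumFinEquiv finSumFinEquiv A') ↔
      (A'.toBlocks₁₂ = 0 ∧ IsBLT m S' A'.toBlocks₂₂) := by
  set e : Fin s ⊕ Fin m ≃ Fin (s + m) := finSumFinEquiv with he
  have hval : ∀ x y, (reindex e e A') (e x) (e y) = A' x y := by
    intro x y; simp [Matrix.reindex_apply, Matrix.submatrix_apply]
  constructor
  · intro h
    constructor
    · ext i j
      have hlt : ((e (Sum.inl i) : Fin (s + m)) : ℕ) < ((e (Sum.inr j) : Fin (s + m)) : ℕ) := by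
        simp [he]; omega
      have hnsb : ¬ sameBlock (s :: S') ((e (Sum.inl i) : Fin (s + m)) : ℕ)
          ((e (Sum.inr j) : Fin (s + m)) : ℕ) := by
        simp only [he, finSumFinEquiv_apply_left, finSumFinEquiv_apply_right,
          Fin.coe_castAdd, Fin.coe_natAdd]
        exact not_sameBlock_cons S' i.isLt (Nat.le_add_right s j)
      have := h _ _ hlt hnsb
      rw [hval] at this
      simpa [Matrix.toBlocks₁₂] using this
    · intro r c hlt hnsb
      have hlt' : ((e (Sum.inr r) : Fin (s + m)) : ℕ) < ((e (Sum.inr c) : Fin (s + m)) : ℕ) := by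
        simp [he]; omega
      have hnsb' : ¬ sameBlock (s :: S') ((e (Sum.inr r) : Fin (s + m)) : ℕ)
          ((e (Sum.inr c) : Fin (s + m)) : ℕ) := by
        simp only [he, finSumFinEquiv_apply_right, Fin.coe_natAdd]
        exact fun hsb => hnsb ((sameBlock_cons_shift S' r c).mp hsb)
      have := h _ _ hlt' hnsb'
      rw [hval] at this
      simpa [Matrix.toBlocks₂₂] using this
  · rintro ⟨h12, h22⟩ r c hlt hnsb
    rw [Matrix.reindex_apply, Matrix.submatrix_apply]
    have hr : r = e (e.symm r) := (e.apply_symm_apply r).symm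
    have hc : c = e (e.symm c) := (e.apply_symm_apply c).symm
    rcases hx : e.symm r with i | i <;> rcases hy : e.symm c with j | j <;>
      rw [hx] at hr <;> rw [hy] at hc
    · exfalso
      apply hnsb
      have hri : (r : ℕ) = (i : ℕ) := by rw [hr]; simp [he]
      have hcj : (c : ℕ) = (j : ℕ) := by rw [hc]; simp [he]
      rw [hri, hcj]
      exact sameBlock_cons_low S' i.isLt j.isLt
    · have : A'.toBlocks₁₂ i j = 0 := by rw [h12]; rfl
      simpa [Matrix.toBlocks₁₂] using this
    · exfalso
      have hri : (r : ℕ) = s + (i : ℕ) := by rw [hr]; simp [he]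
      have hcj : (c : ℕ) = (j : ℕ) := by rw [hc]; simp [he]
      omega
    · have hri : (r : ℕ) = s + (i : ℕ) := by rw [hr]; simp [he]
      have hcj : (c : ℕ) = s + (j : ℕ) := by rw [hc]; simp [he]
      have h1 : (i : ℕ) < (j : ℕ) := by omega
      have h2 : ¬ sameBlock S' (i : ℕ) (j : ℕ) := by
        intro hsb
        apply hnsb
        rw [hri, hcj]
        exact (sameBlock_cons_shift S' i j).mpr hsb
      have := h22 i j h1 h2
      simpa [Matrix.toBlocks₂₂] using this

open Matrix in
lemma isUnit_reindex_iff {s m : ℕ}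
    (A' : Matrix (Fin s ⊕ Fin m) (Fin s ⊕ Fin m) (ZMod 2))
    (h12 : A'.toBlocks₁₂ = 0) :
    IsUnit (reindex finSumFinEquiv finSumFinEquiv A') ↔
      (IsUnit A'.toBlocks₁₁ ∧ IsUnit A'.toBlocks₂₂) := by
  rw [Matrix.isUnit_iff_isUnit_det, Matrix.det_reindex_self]
  conv_lhs => rw [← Matrix.fromBlocks_toBlocks A', h12]
  rw [Matrix.det_fromBlocks_zero₁₂, IsUnit.mul_iff, ← Matrix.isUnit_iff_isUnit_det,
    ← Matrix.isUnit_iff_isUnit_det]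
lemma card_matrix_fin (a b : ℕ) : Nat.card (Matrix (Fin a) (Fin b) (ZMod 2)) = 2 ^ (a * b) := by
  rw [Nat.card_eq_fintype_card]
  show Fintype.card (Fin a → Fin b → ZMod 2) = 2 ^ (a * b)
  simp [Fintype.card_fun, ← pow_mul, Nat.mul_comm]

def prodSubtypeSndEquiv {α β : Type*} (p : β → Prop) : {y : α × β // p y.2} ≃ α × {b // p b} where
  toFun y := (y.1.1, ⟨y.1.2, y.2⟩)
  invFun x := ⟨(x.1, x.2.1), x.2.2⟩
  left_inv y := rfl
  right_inv x := rfl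

def matrixBlocksEquiv {R : Type*} (α β : Type*) :
    Matrix (α ⊕ β) (α ⊕ β) R ≃
      Matrix α α R × Matrix α β R × Matrix β α R × Matrix β β R where
  toFun A := (A.toBlocks₁₁, A.toBlocks₁₂, A.toBlocks₂₁, A.toBlocks₂₂)
  invFun t := Matrix.fromBlocks t.1 t.2.1 t.2.2.1 t.2.2.2
  left_inv A := Matrix.fromBlocks_toBlocks A
  right_inv t := by
    obtain ⟨a, b, c, d⟩ := t
    simp [Matrix.toBlocks_fromBlocks₁₁, Matrix.toBlocks_fromBlocks₁₂,
      Matrix.toBlocks_fromBlocks₂₁, Matrix.toBlocks_fromBlocks₂₂]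

open Matrix in
lemma card_step (s m : ℕ) (S' : List ℕ) :
    Nat.card {A : Matrix (Fin (s + m)) (Fin (s + m)) (ZMod 2) //
        IsBLT (s + m) (s :: S') A ∧ IsUnit A} =
      Nat.card {B : Matrix (Fin s) (Fin s) (ZMod 2) // IsUnit B} * 2 ^ (m * s) *
        Nat.card {D : Matrix (Fin m) (Fin m) (ZMod 2) // IsBLT m S' D ∧ IsUnit D} := by
  set e : Fin s ⊕ Fin m ≃ Fin (s + m) := finSumFinEquiv with he
  have E1 : {A : Matrix (Fin (s + m)) (Fin (s + m)) (ZMod 2) //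
      IsBLT (s + m) (s :: S') A ∧ IsUnit A} ≃
      {A' : Matrix (Fin s ⊕ Fin m) (Fin s ⊕ Fin m) (ZMod 2) //
        IsUnit A'.toBlocks₁₁ ∧ (A'.toBlocks₁₂ = 0 ∧
          (IsBLT m S' A'.toBlocks₂₂ ∧ IsUnit A'.toBlocks₂₂))} := by
    refine Equiv.subtypeEquiv (Matrix.reindex e e).symm fun A => ?_
    have hA : A = Matrix.reindex e e ((Matrix.reindex e e).symm A) :=
      (Equiv.apply_symm_apply _ _).symm
    constructor
    · rintro ⟨hb, hu⟩
      rw [hA] at hb hu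
      obtain ⟨h12, h22⟩ := (blt_reindex_iff S' _).mp hb
      obtain ⟨hu1, hu2⟩ := (isUnit_reindex_iff _ h12).mp hu
      exact ⟨hu1, h12, h22, hu2⟩
    · rintro ⟨hu1, h12, h22, hu2⟩
      rw [hA]
      exact ⟨(blt_reindex_iff S' _).mpr ⟨h12, h22⟩,
        (isUnit_reindex_iff _ h12).mpr ⟨hu1, hu2⟩⟩
  have E2 : {A' : Matrix (Fin s ⊕ Fin m) (Fin s ⊕ Fin m) (ZMod 2) //
        IsUnit A'.toBlocks₁₁ ∧ (A'.toBlocks₁₂ = 0 ∧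
          (IsBLT m S' A'.toBlocks₂₂ ∧ IsUnit A'.toBlocks₂₂))} ≃
      {t : Matrix (Fin s) (Fin s) (ZMod 2) × Matrix (Fin s) (Fin m) (ZMod 2) ×
          Matrix (Fin m) (Fin s) (ZMod 2) × Matrix (Fin m) (Fin m) (ZMod 2) //
        IsUnit t.1 ∧ (t.2.1 = 0 ∧ (IsBLT m S' t.2.2.2 ∧ IsUnit t.2.2.2))} :=
    Equiv.subtypeEquiv (matrixBlocksEquiv (Fin s) (Fin m)) fun A' => Iff.rfl
  rw [Nat.card_congr (E1.trans E2),
    Nat.card_congr (Equiv.subtypeProdEquivProd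
      (p := fun B : Matrix (Fin s) (Fin s) (ZMod 2) => IsUnit B)
      (q := fun x : Matrix (Fin s) (Fin m) (ZMod 2) × Matrix (Fin m) (Fin s) (ZMod 2) ×
          Matrix (Fin m) (Fin m) (ZMod 2) => x.1 = 0 ∧ (IsBLT m S' x.2.2 ∧ IsUnit x.2.2))),
    Nat.card_prod,
    Nat.card_congr (Equiv.subtypeProdEquivProd
      (p := fun z : Matrix (Fin s) (Fin m) (ZMod 2) => z = 0)
      (q := fun y : Matrix (Fin m) (Fin s) (ZMod 2) × Matrix (Fin m) (Fin m) (ZMod 2) =>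
        IsBLT m S' y.2 ∧ IsUnit y.2)),
    Nat.card_prod,
    Nat.card_congr (prodSubtypeSndEquiv
      (fun D : Matrix (Fin m) (Fin m) (ZMod 2) => IsBLT m S' D ∧ IsUnit D)),
    Nat.card_prod]
  have hzero : Nat.card {z : Matrix (Fin s) (Fin m) (ZMod 2) // z = 0} = 1 := by
    haveI : Unique {z : Matrix (Fin s) (Fin m) (ZMod 2) // z = 0} :=
      ⟨⟨⟨0, rfl⟩⟩, by rintro ⟨z, rfl⟩; rfl⟩
    exact Nat.card_unique
  rw [hzero, card_matrix_fin]
  ring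

lemma count_blt (S : List ℕ) :
    Nat.card {A : Matrix (Fin S.sum) (Fin S.sum) (ZMod 2) // IsBLT S.sum S A ∧ IsUnit A} =
      2 ^ (S.sum * (S.sum - 1) / 2) *
        (S.map fun s => ∏ j ∈ Finset.Icc 2 s, (2 ^ j - 1)).prod := by
  induction S with
  | nil =>
    haveI : Unique {A : Matrix (Fin (List.sum ([] : List ℕ))) (Fin (List.sum ([] : List ℕ)))
        (ZMod 2) // IsBLT (List.sum ([] : List ℕ)) [] A ∧ IsUnit A} :=
      ⟨⟨⟨1, fun r _ _ _ => r.elim0, isUnit_one⟩⟩, by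
        rintro ⟨A, hA⟩
        apply Subtype.ext
        ext i j
        exact i.elim0⟩
    rw [Nat.card_unique]
    simp
  | cons s S' ih =>
    show Nat.card {A : Matrix (Fin (s + S'.sum)) (Fin (s + S'.sum)) (ZMod 2) //
        IsBLT (s + S'.sum) (s :: S') A ∧ IsUnit A} = _
    rw [card_step s S'.sum S', gl_card, ih, List.map_cons, List.prod_cons, List.sum_cons,
      tri_add]
    ring

/-- The number of pairs `(A,b)` with `A ∈ BLTL(S)` (invertible, block lower triangular of
profile `S`) and `b ∈ 𝔽₂ⁿ` equals `2^{n(n+1)/2} · ∏_{i=1}^{l} ∏_{j=2}^{s_i} (2^j − 1)`. -/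
theorem card_blta (n : ℕ) (S : List ℕ) (hpos : ∀ s ∈ S, 0 < s) (hsum : S.sum = n) :
    Nat.card {p : Matrix (Fin n) (Fin n) (ZMod 2) × (Fin n → ZMod 2) //
        IsBLT n S p.1 ∧ IsUnit p.1} =
      2 ^ (n * (n + 1) / 2) *
        (S.map (fun s => ∏ j ∈ Finset.Icc 2 s, (2 ^ j - 1))).prod := by
  subst hsum
  have Epair : {p : Matrix (Fin S.sum) (Fin S.sum) (ZMod 2) × (Fin S.sum → ZMod 2) //
      IsBLT S.sum S p.1 ∧ IsUnit p.1} ≃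
      {A : Matrix (Fin S.sum) (Fin S.sum) (ZMod 2) // IsBLT S.sum S A ∧ IsUnit A} ×
      (Fin S.sum → ZMod 2) :=
    ⟨fun p => (⟨p.1.1, p.2⟩, p.1.2), fun x => ⟨(x.1.1, x.2), x.1.2⟩,
      fun _ => rfl, fun _ => rfl⟩
  have hV : Nat.card (Fin S.sum → ZMod 2) = 2 ^ S.sum := by
    simp [Nat.card_eq_fintype_card]
  rw [Nat.card_congr Epair, Nat.card_prod, count_blt, hV, ← tri_succ S.sum, pow_add]
  ring
end

section
/- Let S = (s_1,…,s_l) be a composition of n and S_1 a refinement of S. For every M ∈ BLTL(S) there exists a block-diagonal matrix D = diag(D_1,…,D_l), with each D_i an invertible s_i×s_i matrix over 𝔽₂, such that M^{-1}·D ∈ BLTL(S_1); that is, every coset M·BLTL(S_1) of the subgroup BLTL(S_1) in BLTL(S) contains a block-diagonal matrix. -/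
def blockStart (S : List ℕ) (k : ℕ) : ℕ := (S.take k).sum

lemma blockIdx_lt {n : ℕ} {S : List ℕ} (hsum : S.sum = n) {k : ℕ} (hk : k < S.length)
    {a : ℕ} (ha : a < S[k]) : blockStart S k + a < n := by
  subst hsum
  have h1 : (S.take k).sum + (S.drop k).sum = S.sum := by
    rw [← List.sum_append, List.take_append_drop]
  have h2 : S.drop k = S[k] :: S.drop (k + 1) := List.drop_eq_getElem_cons hk
  have h3 : (S.drop k).sum = S[k] + (S.drop (k + 1)).sum := by rw [h2, List.sum_cons]
  unfold blockStart
  omega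

/-- The `k`-th diagonal block (an `s_k × s_k` matrix) of `M`, w.r.t. the profile `S`. -/
def blockMat (n : ℕ) (S : List ℕ) (hsum : S.sum = n) (M : Matrix (Fin n) (Fin n) (ZMod 2))
    (k : ℕ) (hk : k < S.length) : Matrix (Fin S[k]) (Fin S[k]) (ZMod 2) :=
  fun a b => M ⟨blockStart S k + a, blockIdx_lt hsum hk a.isLt⟩
               ⟨blockStart S k + b, blockIdx_lt hsum hk b.isLt⟩

/-- `M` is block diagonal with respect to the profile `S`. -/
def IsBlockDiag (n : ℕ) (S : List ℕ) (M : Matrix (Fin n) (Fin n) (ZMod 2)) : Prop :=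
  ∀ r c : Fin n, ¬ sameBlock S (r : ℕ) (c : ℕ) → M r c = 0


section Helpers
open Matrix


lemma blockStart_mono (S : List ℕ) {j k : ℕ} (h : j ≤ k) :
    blockStart S j ≤ blockStart S k := by
  unfold blockStart
  conv_rhs => rw [← List.take_append_drop j (S.take k)]
  rw [List.sum_append, List.take_take, min_eq_left h]
  exact Nat.le_add_right _ _

lemma blockStart_le (S : List ℕ) (m : ℕ) : blockStart S m ≤ S.sum := by
  conv_rhs => rw [← List.take_append_drop m S]
  rw [List.sum_append]
  exact Nat.le_add_right _ _

lemma blockStart_succ (S : List ℕ) {k : ℕ} (hk : k < S.length) :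
    blockStart S (k+1) = blockStart S k + S[k] :=
  List.sum_take_succ S k hk

lemma blockStart_cons (s : ℕ) (T : List ℕ) (k : ℕ) :
    blockStart (s::T) (k+1) = s + blockStart T k := by
  simp [blockStart, List.take_succ_cons]

lemma block_cover (S : List ℕ) (r : ℕ) (hr : r < S.sum) :
    ∃ k, k < S.length ∧ blockStart S k ≤ r ∧ r < blockStart S (k+1) := by
  induction S generalizing r with
  | nil => simp at hr
  | cons s T ih =>
    by_cases h : r < s
    · refine ⟨0, by simp, by simp [blockStart], ?_⟩
      rw [show (0:ℕ)+1 = 0+1 from rfl, blockStart_cons]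
      omega
    · have hr' : r - s < T.sum := by simp [List.sum_cons] at hr; omega
      obtain ⟨k, hk, h1, h2⟩ := ih (r - s) hr'
      refine ⟨k+1, by simp; omega, ?_, ?_⟩
      · rw [blockStart_cons]; omega
      · rw [blockStart_cons]; omega

lemma block_unique (S : List ℕ) {j k r : ℕ}
    (hj1 : blockStart S j ≤ r) (hj2 : r < blockStart S (j+1))
    (hk1 : blockStart S k ≤ r) (hk2 : r < blockStart S (k+1)) : j = k := by
  by_contra hne
  rcases Nat.lt_or_ge j k with h | h
  · have := blockStart_mono S (show j+1 ≤ k by omega); omega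
  · have := blockStart_mono S (show k+1 ≤ j by omega); omega

lemma inv_boundary {n m : ℕ} (M : Matrix (Fin n) (Fin n) (ZMod 2)) (hM : IsUnit M)
    (h : ∀ r c : Fin n, (r:ℕ) < m → m ≤ (c:ℕ) → M r c = 0) :
    ∀ r c : Fin n, (r:ℕ) < m → m ≤ (c:ℕ) → M⁻¹ r c = 0 := by
  classical
  have hdet : IsUnit M.det := (Matrix.isUnit_iff_isUnit_det M).mp hM
  have hcancel : ∀ x : Fin n → ZMod 2, M⁻¹ *ᵥ (M *ᵥ x) = x := by
    intro x
    rw [Matrix.mulVec_mulVec, Matrix.nonsing_inv_mul M hdet, Matrix.one_mulVec]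
  let W := {x : Fin n → ZMod 2 // ∀ r : Fin n, (r:ℕ) < m → x r = 0}
  have hmem : ∀ x : W, ∀ r : Fin n, (r:ℕ) < m → (M *ᵥ x.1) r = 0 := by
    intro x r hr
    show ∑ c, M r c * x.1 c = 0
    apply Finset.sum_eq_zero
    intro c _
    by_cases hc : m ≤ (c:ℕ)
    · rw [h r c hr hc, zero_mul]
    · rw [x.2 c (by omega), mul_zero]
  let f : W → W := fun x => ⟨M *ᵥ x.1, hmem x⟩
  have hinj : Function.Injective f := by
    intro x y hxy
    have : M *ᵥ x.1 = M *ᵥ y.1 := congrArg Subtype.val hxy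
    have hx := hcancel x.1
    have hy := hcancel y.1
    apply Subtype.ext
    rw [← hx, ← hy, this]
  have hsurj : Function.Surjective f := Finite.surjective_of_injective hinj
  intro r c hr hc
  have hz : ∀ r' : Fin n, (r':ℕ) < m → ((Pi.single c (1:ZMod 2) : Fin n → ZMod 2)) r' = 0 := by
    intro r' hr'
    have hne : r' ≠ c := fun e => by rw [e] at hr'; omega
    simp [Pi.single_apply, hne]
  obtain ⟨x, hx⟩ := hsurj ⟨(Pi.single c (1:ZMod 2) : Fin n → ZMod 2), hz⟩
  have hxval : M *ᵥ x.1 = (Pi.single c (1:ZMod 2) : Fin n → ZMod 2) := congrArg Subtype.val hx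
  have : M⁻¹ *ᵥ (Pi.single c (1:ZMod 2) : Fin n → ZMod 2) = x.1 := by rw [← hxval, hcancel]
  have happ : (M⁻¹ *ᵥ (Pi.single c (1:ZMod 2) : Fin n → ZMod 2)) r = M⁻¹ r c := by
    simp [Matrix.mulVec, dotProduct, Pi.single_apply]
  rw [← happ, this]
  exact x.2 r hr

lemma sum_outside {n a s : ℕ} (hs : a + s ≤ n) (f : Fin n → ZMod 2)
    (hf : ∀ j : Fin n, ((j:ℕ) < a ∨ a + s ≤ (j:ℕ)) → f j = 0) :
    ∑ j, f j = ∑ t : Fin s, f ⟨a + t, by omega⟩ := by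
  classical
  have hinj : ∀ x ∈ Finset.univ, ∀ y ∈ Finset.univ,
      (fun t : Fin s => (⟨a + t, by omega⟩ : Fin n)) x =
      (fun t : Fin s => (⟨a + t, by omega⟩ : Fin n)) y → x = y := by
    intro x _ y _ h
    apply Fin.ext
    simp only [Fin.mk.injEq] at h
    omega
  rw [← Finset.sum_image (f := f) hinj]
  refine (Finset.sum_subset (Finset.subset_univ _) ?_).symm
  intro j _ hj
  apply hf
  by_contra hcon
  push_neg at hcon
  refine hj (Finset.mem_image.mpr ⟨⟨(j:ℕ) - a, by omega⟩, Finset.mem_univ _, ?_⟩)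
  apply Fin.ext
  simp
  omega

lemma block_unit {n a s : ℕ} (N : Matrix (Fin n) (Fin n) (ZMod 2)) (hN : IsUnit N)
    (hs : a + s ≤ n)
    (ha : ∀ r c : Fin n, (r:ℕ) < a → a ≤ (c:ℕ) → N r c = 0)
    (hb : ∀ r c : Fin n, (r:ℕ) < a + s → a + s ≤ (c:ℕ) → N r c = 0) :
    IsUnit (Matrix.of fun i j : Fin s =>
      N ⟨a + i, by omega⟩ ⟨a + j, by omega⟩) := by
  classical
  haveI : Fact (Nat.Prime 2) := ⟨Nat.prime_two⟩
  set B : Matrix (Fin s) (Fin s) (ZMod 2) :=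
    Matrix.of fun i j : Fin s => N ⟨a + i, by omega⟩ ⟨a + j, by omega⟩ with hB
  have hdetN : IsUnit N.det := (Matrix.isUnit_iff_isUnit_det N).mp hN
  apply (Matrix.isUnit_iff_isUnit_det B).mpr
  rcases eq_or_ne B.det 0 with hdet | hdet
  · exfalso
    obtain ⟨v, hv0, hv⟩ := (Matrix.exists_mulVec_eq_zero_iff).mpr hdet
    -- extend v to Fin n
    set x : Fin n → ZMod 2 := fun j =>
      if h : a ≤ (j:ℕ) ∧ (j:ℕ) < a + s then v ⟨(j:ℕ) - a, by omega⟩ else 0 with hx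
    have hxblock : ∀ t : Fin s, x ⟨a + t, by omega⟩ = v t := by
      intro t
      have hcond : a ≤ a + (t:ℕ) ∧ a + (t:ℕ) < a + s := ⟨by omega, by omega⟩
      show dite _ _ _ = v t
      rw [dif_pos hcond]
      congr 1
      apply Fin.ext
      simp
    have hz : ∀ r : Fin n, (r:ℕ) < a + s → (N *ᵥ x) r = 0 := by
      intro r hr
      have : (N *ᵥ x) r = ∑ j, N r j * x j := rfl
      rw [this, sum_outside hs (fun j => N r j * x j) ?_]
      · by_cases hra : (r:ℕ) < a
        · apply Finset.sum_eq_zero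
          intro t _
          rw [ha r ⟨a + t, by omega⟩ hra (by simp), zero_mul]
        · have hrb : a ≤ (r:ℕ) ∧ (r:ℕ) < a + s := ⟨by omega, hr⟩
          have : ∑ t : Fin s, N r ⟨a + t, by omega⟩ * x ⟨a + t, by omega⟩
              = (B *ᵥ v) ⟨(r:ℕ) - a, by omega⟩ := by
            show _ = ∑ t, B ⟨(r:ℕ) - a, by omega⟩ t * v t
            apply Finset.sum_congr rfl
            intro t _
            rw [hxblock t]
            congr 2
            apply Fin.ext
            simp
            omega
          rw [this, hv]
          rfl
      · intro j hj
        show N r j * x j = 0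
        have : x j = 0 := by
          show dite _ _ _ = (0 : ZMod 2)
          rw [dif_neg]; omega
        rw [this, mul_zero]
    -- x = N⁻¹ * (N x), and N⁻¹ preserves vanishing below a+s
    have hinv := inv_boundary N hN hb
    have hxr : ∀ r : Fin n, (r:ℕ) < a + s → x r = 0 := by
      intro r hr
      have hcan : N⁻¹ *ᵥ (N *ᵥ x) = x := by
        rw [Matrix.mulVec_mulVec, Matrix.nonsing_inv_mul N hdetN, Matrix.one_mulVec]
      rw [← hcan]
      show ∑ c, N⁻¹ r c * (N *ᵥ x) c = 0
      apply Finset.sum_eq_zero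
      intro c _
      by_cases hc : (c:ℕ) < a + s
      · rw [hz c hc, mul_zero]
      · rw [hinv r c hr (by omega), zero_mul]
    apply hv0
    funext t
    have := hxr ⟨a + t, by omega⟩ (by show a + (t:ℕ) < a + s; omega)
    rw [hxblock t] at this
    exact this
  · exact Ne.isUnit hdet

def pad (n a s : ℕ) (B : Matrix (Fin s) (Fin s) (ZMod 2)) : Matrix (Fin n) (Fin n) (ZMod 2) :=
  Matrix.of fun r c : Fin n =>
    if h : a ≤ (r:ℕ) ∧ (r:ℕ) < a + s ∧ a ≤ (c:ℕ) ∧ (c:ℕ) < a + s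
    then B ⟨(r:ℕ) - a, by omega⟩ ⟨(c:ℕ) - a, by omega⟩ else 0

lemma pad_pos {n a s : ℕ} (B : Matrix (Fin s) (Fin s) (ZMod 2)) {r c : Fin n}
    (h : a ≤ (r:ℕ) ∧ (r:ℕ) < a + s ∧ a ≤ (c:ℕ) ∧ (c:ℕ) < a + s) :
    pad n a s B r c = B ⟨(r:ℕ) - a, by omega⟩ ⟨(c:ℕ) - a, by omega⟩ :=
  dif_pos h

lemma mat_congr {m m' : ℕ} (B : Matrix (Fin m) (Fin m') (ZMod 2)) {i i' : Fin m}
    {j j' : Fin m'} (hi : (i:ℕ) = (i':ℕ)) (hj : (j:ℕ) = (j':ℕ)) : B i j = B i' j' := by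
  rw [show i = i' from Fin.ext hi, show j = j' from Fin.ext hj]

lemma pad_neg {n a s : ℕ} (B : Matrix (Fin s) (Fin s) (ZMod 2)) {r c : Fin n}
    (h : ¬(a ≤ (r:ℕ) ∧ (r:ℕ) < a + s ∧ a ≤ (c:ℕ) ∧ (c:ℕ) < a + s)) :
    pad n a s B r c = 0 :=
  dif_neg h


end Helpers

/-- Let `S₁ = P.flatten` refine the composition `S` of `n`.  Every coset `M·BLTL(S₁)` of
`BLTL(S₁)` in `BLTL(S)` contains a block-diagonal matrix: for every `M ∈ BLTL(S)` there
is a block-diagonal `D = diag(D_1,…,D_l)` with invertible blocks and `M⁻¹·D ∈ BLTL(S₁)`. -/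
theorem coset_contains_blockDiag (n : ℕ) (S : List ℕ) (hpos : ∀ s ∈ S, 0 < s)
    (hsum : S.sum = n) (P : List (List ℕ)) (hP : P.map List.sum = S)
    (hPpos : ∀ l ∈ P, ∀ x ∈ l, 0 < x) (S₁ : List ℕ) (hS₁ : S₁ = P.flatten)
    (M : Matrix (Fin n) (Fin n) (ZMod 2)) (hMblt : IsBLT n S M) (hMunit : IsUnit M) :
    ∃ D : Matrix (Fin n) (Fin n) (ZMod 2),
      IsBlockDiag n S D ∧
      (∀ (k : ℕ) (hk : k < S.length), IsUnit (blockMat n S hsum D k hk)) ∧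
      IsBLT n S₁ (M⁻¹ * D) ∧ IsUnit (M⁻¹ * D) := by
  classical
  have hAsucc : ∀ (k : ℕ) (hk : k < S.length), blockStart S (k+1) = blockStart S k + S[k] :=
    fun k hk => blockStart_succ S hk
  have hAle : ∀ m, blockStart S m ≤ n := fun m => hsum ▸ blockStart_le S m
  have hMb : ∀ m, ∀ r c : Fin n,
      (r:ℕ) < blockStart S m → blockStart S m ≤ (c:ℕ) → M r c = 0 := by
    intro m r c hr hc
    apply hMblt r c (by omega)
    rintro ⟨k, h1, h2, h3, h4⟩
    have e1 : blockStart S k ≤ (r:ℕ) := h1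
    have e2 : (c:ℕ) < blockStart S (k+1) := h4
    have hkm : k + 1 ≤ m := by
      by_contra hcon
      have hmk : m ≤ k := by omega
      have := blockStart_mono S hmk
      omega
    have := blockStart_mono S hkm
    omega
  set N := M⁻¹ with hNdef
  have hdetM : IsUnit M.det := (Matrix.isUnit_iff_isUnit_det M).mp hMunit
  have hNunit : IsUnit N :=
    ⟨⟨N, M, Matrix.nonsing_inv_mul M hdetM, Matrix.mul_nonsing_inv M hdetM⟩, rfl⟩
  have hNb : ∀ m, ∀ r c : Fin n,
      (r:ℕ) < blockStart S m → blockStart S m ≤ (c:ℕ) → N r c = 0 :=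
    fun m => inv_boundary M hMunit (hMb m)
  have hBk : ∀ (k : ℕ) (hk : k < S.length), IsUnit (blockMat n S hsum N k hk) := by
    intro k hk
    have hs : blockStart S k + S[k] ≤ n := by
      have h1 := hAle (k+1); rw [hAsucc k hk] at h1; exact h1
    have hb' : ∀ r c : Fin n, (r:ℕ) < blockStart S k + S[k] →
        blockStart S k + S[k] ≤ (c:ℕ) → N r c = 0 := by
      intro r c h1 h2
      exact hNb (k+1) r c (by rw [hAsucc k hk]; omega) (by rw [hAsucc k hk]; omega)
    exact block_unit N hNunit hs (hNb k) hb'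
  set D : Matrix (Fin n) (Fin n) (ZMod 2) :=
    ∑ k : Fin S.length,
      pad n (blockStart S (k:ℕ)) (S[(k:ℕ)]'k.isLt) ((blockMat n S hsum N (k:ℕ) k.isLt)⁻¹)
    with hD
  have hDapply : ∀ r c : Fin n, D r c = ∑ k : Fin S.length,
      pad n (blockStart S (k:ℕ)) (S[(k:ℕ)]'k.isLt)
        ((blockMat n S hsum N (k:ℕ) k.isLt)⁻¹) r c := by
    intro r c
    rw [hD, Matrix.sum_apply]
  have hDzero : ∀ r c : Fin n,
      (∀ m : Fin S.length, ¬(blockStart S (m:ℕ) ≤ (r:ℕ) ∧ (r:ℕ) < blockStart S ((m:ℕ)+1) ∧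
        blockStart S (m:ℕ) ≤ (c:ℕ) ∧ (c:ℕ) < blockStart S ((m:ℕ)+1))) → D r c = 0 := by
    intro r c h
    rw [hDapply]
    apply Finset.sum_eq_zero
    intro m _
    apply pad_neg
    intro hcond
    apply h m
    have hms := hAsucc (m:ℕ) m.isLt
    exact ⟨hcond.1, by omega, hcond.2.2.1, by omega⟩
  have hcover : ∀ r : Fin n, ∃ k : Fin S.length,
      blockStart S (k:ℕ) ≤ (r:ℕ) ∧ (r:ℕ) < blockStart S ((k:ℕ)+1) := by
    intro r
    obtain ⟨k, hk, h1, h2⟩ := block_cover S (r:ℕ) (by rw [hsum]; exact r.isLt)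
    exact ⟨⟨k, hk⟩, h1, h2⟩
  have hDblock : ∀ (k : Fin S.length) (r c : Fin n)
      (hr1 : blockStart S (k:ℕ) ≤ (r:ℕ)) (hr2 : (r:ℕ) < blockStart S ((k:ℕ)+1))
      (hc1 : blockStart S (k:ℕ) ≤ (c:ℕ)) (hc2 : (c:ℕ) < blockStart S ((k:ℕ)+1)),
      D r c = (blockMat n S hsum N (k:ℕ) k.isLt)⁻¹
        ⟨(r:ℕ) - blockStart S (k:ℕ), by have := hAsucc (k:ℕ) k.isLt; omega⟩
        ⟨(c:ℕ) - blockStart S (k:ℕ), by have := hAsucc (k:ℕ) k.isLt; omega⟩ := by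
    intro k r c hr1 hr2 hc1 hc2
    have hks := hAsucc (k:ℕ) k.isLt
    rw [hDapply]
    rw [Finset.sum_eq_single_of_mem k (Finset.mem_univ k)]
    · exact pad_pos _ ⟨hr1, by omega, hc1, by omega⟩
    · intro m _ hmk
      apply pad_neg
      intro hcond
      have hms := hAsucc (m:ℕ) m.isLt
      have : (m:ℕ) = (k:ℕ) :=
        block_unique S hcond.1 (by omega) hr1 hr2
      exact hmk (Fin.ext this)
  -- the key entry computation
  have hentry : ∀ (r c : Fin n) (k : Fin S.length),
      blockStart S (k:ℕ) ≤ (c:ℕ) → (c:ℕ) < blockStart S ((k:ℕ)+1) →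
      (r:ℕ) < blockStart S ((k:ℕ)+1) →
      (N * D) r c = if (r:ℕ) = (c:ℕ) then 1 else 0 := by
    intro r c k hc1 hc2 hrlt
    have hks := hAsucc (k:ℕ) k.isLt
    have hsle : blockStart S (k:ℕ) + S[(k:ℕ)]'k.isLt ≤ n := by
      have := hAle ((k:ℕ)+1); omega
    rw [Matrix.mul_apply]
    have hout : ∀ j : Fin n,
        ((j:ℕ) < blockStart S (k:ℕ) ∨ blockStart S (k:ℕ) + S[(k:ℕ)]'k.isLt ≤ (j:ℕ)) →
        N r j * D j c = 0 := by
      intro j hj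
      have hDjc : D j c = 0 := by
        apply hDzero
        intro m hcond
        have hmk : (m:ℕ) = (k:ℕ) :=
          block_unique S hcond.2.2.1 hcond.2.2.2 hc1 hc2
        have h1 := hcond.1
        have h2 := hcond.2.1
        rw [hmk] at h1 h2
        omega
      rw [hDjc, mul_zero]
    rw [sum_outside hsle _ hout]
    have hterm : ∀ t : Fin (S[(k:ℕ)]'k.isLt),
        N r ⟨blockStart S (k:ℕ) + (t:ℕ), by omega⟩ *
          D ⟨blockStart S (k:ℕ) + (t:ℕ), by omega⟩ c
        = N r ⟨blockStart S (k:ℕ) + (t:ℕ), by omega⟩ *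
          (blockMat n S hsum N (k:ℕ) k.isLt)⁻¹ t
            ⟨(c:ℕ) - blockStart S (k:ℕ), by omega⟩ := by
      intro t
      congr 1
      rw [hDblock k ⟨blockStart S (k:ℕ) + (t:ℕ), by omega⟩ c
        (by show blockStart S (k:ℕ) ≤ blockStart S (k:ℕ) + (t:ℕ); omega)
        (by show blockStart S (k:ℕ) + (t:ℕ) < blockStart S ((k:ℕ)+1); omega)
        hc1 hc2]
      apply mat_congr
      · show blockStart S (k:ℕ) + (t:ℕ) - blockStart S (k:ℕ) = (t:ℕ)
        omega
      · rfl
    by_cases hra : (r:ℕ) < blockStart S (k:ℕ)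
    · rw [if_neg (by omega)]
      apply Finset.sum_eq_zero
      intro t _
      show N r ⟨blockStart S (k:ℕ) + (t:ℕ), _⟩ * D ⟨blockStart S (k:ℕ) + (t:ℕ), _⟩ c = 0
      rw [hNb (k:ℕ) r ⟨blockStart S (k:ℕ) + (t:ℕ), by omega⟩ hra
        (by show blockStart S (k:ℕ) ≤ blockStart S (k:ℕ) + (t:ℕ); omega), zero_mul]
    · have hr1 : blockStart S (k:ℕ) ≤ (r:ℕ) := by omega
      have hsum2 : ∑ t : Fin (S[(k:ℕ)]'k.isLt),
          N r ⟨blockStart S (k:ℕ) + (t:ℕ), by omega⟩ *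
            D ⟨blockStart S (k:ℕ) + (t:ℕ), by omega⟩ c
          = ((blockMat n S hsum N (k:ℕ) k.isLt) * (blockMat n S hsum N (k:ℕ) k.isLt)⁻¹)
              ⟨(r:ℕ) - blockStart S (k:ℕ), by omega⟩
              ⟨(c:ℕ) - blockStart S (k:ℕ), by omega⟩ := by
        rw [Matrix.mul_apply]
        apply Finset.sum_congr rfl
        intro t _
        rw [hterm t]
        congr 1
        show N r ⟨blockStart S (k:ℕ) + (t:ℕ), _⟩ =
          N ⟨blockStart S (k:ℕ) + ((r:ℕ) - blockStart S (k:ℕ)), _⟩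
            ⟨blockStart S (k:ℕ) + (t:ℕ), _⟩
        apply mat_congr
        · show (r:ℕ) = blockStart S (k:ℕ) + ((r:ℕ) - blockStart S (k:ℕ))
          omega
        · rfl
      rw [hsum2, Matrix.mul_nonsing_inv _
        ((Matrix.isUnit_iff_isUnit_det _).mp (hBk (k:ℕ) k.isLt)), Matrix.one_apply]
      simp only [Fin.mk.injEq]
      split_ifs with h1 h2
      · rfl
      · omega
      · omega
      · rfl
  have hNDlt : ∀ r c : Fin n, (r:ℕ) < (c:ℕ) → (N * D) r c = 0 := by
    intro r c hrc
    obtain ⟨k, hc1, hc2⟩ := hcover c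
    rw [hentry r c k hc1 hc2 (by omega), if_neg (by omega)]
  have hNDdiag : ∀ r : Fin n, (N * D) r r = 1 := by
    intro r
    obtain ⟨k, h1, h2⟩ := hcover r
    rw [hentry r r k h1 h2 h2, if_pos rfl]
  refine ⟨D, ?_, ?_, ?_, ?_⟩
  · intro r c hsb
    apply hDzero
    intro m hcond
    exact hsb ⟨(m:ℕ), hcond.1, hcond.2.1, hcond.2.2.1, hcond.2.2.2⟩
  · intro k hk
    have hks := hAsucc k hk
    have hblockD : blockMat n S hsum D k hk = (blockMat n S hsum N k hk)⁻¹ := by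
      funext a b
      show D ⟨blockStart S k + (a:ℕ), _⟩ ⟨blockStart S k + (b:ℕ), _⟩ = _
      rw [hDblock ⟨k, hk⟩ ⟨blockStart S k + (a:ℕ), blockIdx_lt hsum hk a.isLt⟩
        ⟨blockStart S k + (b:ℕ), blockIdx_lt hsum hk b.isLt⟩
        (by show blockStart S k ≤ blockStart S k + (a:ℕ); omega)
        (by show blockStart S k + (a:ℕ) < blockStart S (k+1); omega)
        (by show blockStart S k ≤ blockStart S k + (b:ℕ); omega)
        (by show blockStart S k + (b:ℕ) < blockStart S (k+1); omega)]
      apply mat_congr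
      · show blockStart S k + (a:ℕ) - blockStart S k = (a:ℕ)
        omega
      · show blockStart S k + (b:ℕ) - blockStart S k = (b:ℕ)
        omega
    rw [hblockD]
    have hu := hBk k hk
    have hdetB := (Matrix.isUnit_iff_isUnit_det _).mp hu
    exact ⟨⟨(blockMat n S hsum N k hk)⁻¹, blockMat n S hsum N k hk,
      Matrix.nonsing_inv_mul _ hdetB, Matrix.mul_nonsing_inv _ hdetB⟩, rfl⟩
  · intro r c hrc _
    exact hNDlt r c hrc
  · have hlow : (N * D).BlockTriangular OrderDual.toDual := by
      intro i j hij
      exact hNDlt i j hij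
    have hdet : (N * D).det = 1 := by
      rw [Matrix.det_of_lowerTriangular _ hlow]
      simp [hNDdiag]
    rw [Matrix.isUnit_iff_isUnit_det, hdet]
    exact isUnit_one
end
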